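/- arXiv:0807.1217 — 16 statements merged into one kernel-verified Lean document; each statement's English description precedes it below -/
import Mathlib

section
/- Let D be a finite, connected, acyclic directed graph admitting a U-coloring of its arcs. Then D has a unique sink. -/
/-- An arc coloring `c` of a digraph with arc relation `A` is a U-coloring if
arcs leaving a common vertex get distinct colors (U1) and every pair of arcs
leaving a common vertex can be completed to a "diamond" with matching colors (U2). -/
def UColoring {V κ : Type*} (A : V → V → Prop) (c : V → V → κ) : Prop :=
  (∀ v u w : V, A v u → A v w → u ≠ w → c v u ≠ c v w) ∧
  (∀ v u w : V, A v u → A v w → u ≠ w →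
    ∃ z : V, A u z ∧ A w z ∧ c v u = c w z ∧ c v w = c u z)

/-- A finite, connected, acyclic digraph admitting a U-coloring has a unique sink. -/
theorem stmt_0 {V κ : Type} [Fintype V] [Nonempty V] (A : V → V → Prop) (c : V → V → κ)
    (hconn : ∀ x y : V, Relation.ReflTransGen (fun a b => A a b ∨ A b a) x y)
    (hacyc : ∀ x : V, ¬ Relation.TransGen A x x)
    (hU : UColoring A c) :
    ∃! s : V, ∀ w : V, ¬ A s w := by
  obtain ⟨hU1, hU2⟩ := hU
  have hcr : ∀ a b c', A a b → A a c' →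
      ∃ d, Relation.ReflGen A b d ∧ Relation.ReflTransGen A c' d := by
    intro a b c' hab hac
    by_cases h : b = c'
    · subst h; exact ⟨b, .refl, .refl⟩
    · obtain ⟨z, hbz, hcz, -, -⟩ := hU2 a b c' hab hac h
      exact ⟨z, .single hbz, .single hcz⟩
  have heq := Relation.equivalence_join_reflTransGen hcr
  -- well-foundedness of the reverse relation
  haveI : IsTrans V (Relation.TransGen fun a b : V => A b a) := ⟨fun _ _ _ => .trans⟩
  haveI : IsIrrefl V (Relation.TransGen fun a b : V => A b a) := by
    constructor
    intro x hx
    exact hacyc x ((Relation.transGen_swap).mp hx)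
  have hwfT : WellFounded (Relation.TransGen fun a b : V => A b a) :=
    Finite.wellFounded_of_trans_of_irrefl _
  have hwf : WellFounded (fun a b : V => A b a) :=
    Subrelation.wf (q := fun a b : V => A b a) (r := Relation.TransGen fun a b : V => A b a) (fun h => Relation.TransGen.single h) hwfT
  obtain ⟨s, -, hs⟩ := hwf.has_min Set.univ ⟨Classical.arbitrary V, trivial⟩
  have hsink : ∀ w, ¬ A s w := fun w hw => hs w trivial hw
  refine ⟨s, hsink, ?_⟩
  intro t ht
  have hstep : ∀ x y : V, (A x y ∨ A y x) → Relation.Join (Relation.ReflTransGen A) x y := by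
    intro x y h
    cases h with
    | inl h => exact ⟨y, .single h, .refl⟩
    | inr h => exact ⟨x, .refl, .single h⟩
  have hjoin0 : ∀ x y : V, Relation.ReflTransGen (fun a b => A a b ∨ A b a) x y →
      Relation.Join (Relation.ReflTransGen A) x y := by
    intro x y h
    induction h with
    | refl => exact heq.refl x
    | tail h hxy ih => exact heq.trans ih (hstep _ _ hxy)
  have hjoin := hjoin0 t s (hconn t s)
  obtain ⟨d, htd, hsd⟩ := hjoin
  have hd1 : d = s := by
    rcases hsd.cases_head with h | ⟨c', hc, -⟩
    · exact h.symm
    · exact absurd hc (hsink c')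
  have hd2 : d = t := by
    rcases htd.cases_head with h | ⟨c', hc, -⟩
    · exact h.symm
    · exact absurd hc (ht c')
  rw [← hd2, hd1]
end

section
/- Let D be a digraph with a U-coloring c, let (x,y) be an arc, and let p = x_0,…,x_k be a directed path with x_0 = x. Then there exists a sequence y_0=y, y_1, …, y_ℓ such that (x_i,y_i) is an arc with c(x_i,y_i)=c(x,y) for each i ≤ ℓ, and (y_i, y_{i+1}) is an arc with c(y_i,y_{i+1}) = c(x_i,x_{i+1}) for each i < ℓ, and either ℓ = k, or ℓ < k and y_ℓ = x_{ℓ+1}. Moreover the latter case occurs if and only if some arc (x_ℓ, x_{ℓ+1}) on p satisfies c(x_ℓ,x_{ℓ+1}) = c(x,y). -/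
/-- Path chasing lemma: given an arc (x,y) and a directed path p = x_0,…,x_k
with x_0 = x, there is a sequence y_0 = y, …, y_ℓ of companions with arcs
(x_i, y_i) of color c(x,y) and arcs (y_i, y_{i+1}) of color c(x_i,x_{i+1}),
and either ℓ = k, or ℓ < k and y_ℓ = x_{ℓ+1}; the latter happens iff some arc
of p has the color c(x,y). -/
theorem stmt_1 {V κ : Type} (A : V → V → Prop) (c : V → V → κ) (hU : UColoring A c)
    (x y : V) (hxy : A x y) (k : ℕ) (p : ℕ → V) (hp0 : p 0 = x)
    (hp : ∀ i, i < k → A (p i) (p (i + 1))) :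
    ∃ (ℓ : ℕ) (q : ℕ → V), ℓ ≤ k ∧ q 0 = y ∧
      (∀ i, i ≤ ℓ → A (p i) (q i) ∧ c (p i) (q i) = c x y) ∧
      (∀ i, i < ℓ → A (q i) (q (i + 1)) ∧ c (q i) (q (i + 1)) = c (p i) (p (i + 1))) ∧
      (ℓ = k ∨ (ℓ < k ∧ q ℓ = p (ℓ + 1))) ∧
      ((ℓ < k ∧ q ℓ = p (ℓ + 1)) ↔ ∃ j, j < k ∧ c (p j) (p (j + 1)) = c x y) := by
  induction k with
  | zero =>
    refine ⟨0, fun _ => y, le_refl 0, rfl, ?_, ?_, Or.inl rfl, ?_⟩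
    · intro i hi
      have : i = 0 := by omega
      subst this
      exact ⟨hp0 ▸ hxy, by rw [hp0]⟩
    · intro i hi; omega
    · constructor
      · rintro ⟨h, _⟩; omega
      · rintro ⟨j, hj, _⟩; omega
  | succ k ih =>
    obtain ⟨ℓ, q, hℓ, hq0, hA, hB, hC, hIff⟩ := ih (fun i hi => hp i (by omega))
    rcases hC with hC | ⟨hlt, heq⟩
    · subst hC
      have hnone : ¬ ∃ j, j < ℓ ∧ c (p j) (p (j + 1)) = c x y := by
        intro h
        exact absurd (hIff.mpr h).1 (lt_irrefl ℓ)
      by_cases hstop : q ℓ = p (ℓ + 1)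
      · refine ⟨ℓ, q, by omega, hq0, hA, hB, Or.inr ⟨by omega, hstop⟩, ?_⟩
        constructor
        · intro _
          exact ⟨ℓ, by omega, by rw [← hstop]; exact (hA ℓ le_rfl).2⟩
        · intro _; exact ⟨by omega, hstop⟩
      · obtain ⟨z, hqz, hpz, hc1, hc2⟩ :=
          hU.2 (p ℓ) (q ℓ) (p (ℓ + 1)) (hA ℓ le_rfl).1 (hp ℓ (by omega)) hstop
        refine ⟨ℓ + 1, fun i => if i = ℓ + 1 then z else q i, le_rfl, ?_, ?_, ?_,
          Or.inl rfl, ?_⟩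
        · simp only [if_neg (by omega : ¬ (0 : ℕ) = ℓ + 1)]
          exact hq0
        · intro i hi
          by_cases h : i = ℓ + 1
          · subst h
            simp only [↓reduceIte]
            exact ⟨hpz, by rw [← hc1]; exact (hA ℓ le_rfl).2⟩
          · simp only [if_neg h]
            exact hA i (by omega)
        · intro i hi
          by_cases h : i = ℓ
          · subst h
            simp only [if_neg (by omega : ¬ i = i + 1)]
            simp only [↓reduceIte]
            exact ⟨hqz, hc2.symm⟩
          · simp only [if_neg (by omega : ¬ i = ℓ + 1), if_neg (by omega : ¬ i + 1 = ℓ + 1)]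
            exact hB i (by omega)
        · constructor
          · rintro ⟨h, _⟩; omega
          · rintro ⟨j, hj, hcol⟩
            exfalso
            by_cases h : j = ℓ
            · subst h
              exact hU.1 (p j) (q j) (p (j + 1)) (hA j le_rfl).1 (hp j (by omega)) hstop
                ((hA j le_rfl).2.trans hcol.symm)
            · exact hnone ⟨j, by omega, hcol⟩
    · refine ⟨ℓ, q, by omega, hq0, hA, hB, Or.inr ⟨by omega, heq⟩, ?_⟩
      obtain ⟨j, hj, hc⟩ := hIff.mp ⟨hlt, heq⟩
      constructor
      · intro _; exact ⟨j, by omega, hc⟩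
      · intro _; exact ⟨by omega, heq⟩
end

section
/- Let D be a finite, connected, acyclic digraph with a U-coloring and with unique sink s. For any vertex x and any two directed paths p, p' from x to a common vertex z, the multisets of colors appearing on the arcs of p and of p' are equal. -/
/-!
Well-founded induction on the vertex `x`, for paths ending at the sink `s`. Two paths out of `x`
either start along the same arc, and then the induction hypothesis applies to its head, or along
distinct arcs `x → u`, `x → w`; then (U2) gives a vertex `z` with `c x u = c w z` and
`c x w = c u z`, and continuing both paths through `z` along one fixed path to `s` shows that
they carry the same colors. A path to an arbitrary common end vertex is reduced to this case by
appending a path from that vertex to `s`, which exists because every maximal path ends at `s`.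
-/

open Relation

/-- `ColoredPath A c x z m`: some directed path from `x` to `z` has color multiset `m`. -/
inductive ColoredPath {V κ : Type*} (A : V → V → Prop) (c : V → V → κ) :
    V → V → Multiset κ → Prop
  | nil (x : V) : ColoredPath A c x x 0
  | cons {x y z : V} {m : Multiset κ} : A x y → ColoredPath A c y z m →
      ColoredPath A c x z (c x y ::ₘ m)

section

variable {V κ : Type*} {A : V → V → Prop} {c : V → V → κ}

namespace ColoredPath

theorem trans {x y z : V} {m m' : Multiset κ} (h : ColoredPath A c x y m)
    (h' : ColoredPath A c y z m') : ColoredPath A c x z (m + m') := by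
  induction h with
  | nil => simpa using h'
  | cons hxy _ ih => simpa [Multiset.cons_add] using cons hxy (ih h')

theorem reflTransGen {x z : V} {m : Multiset κ} (h : ColoredPath A c x z m) :
    ReflTransGen A x z := by
  induction h with
  | nil => exact .refl
  | cons hxy _ ih => exact .head hxy ih

theorem exists_of_reflTransGen {x z : V} (h : ReflTransGen A x z) :
    ∃ m, ColoredPath A c x z m := by
  induction h using ReflTransGen.head_induction_on with
  | refl => exact ⟨0, nil z⟩
  | head hxy _ ih =>
    obtain ⟨m, hm⟩ := ih
    exact ⟨_, cons hxy hm⟩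

theorem eq_zero_of_self {x : V} {m : Multiset κ} (hacyc : ∀ y, ¬ TransGen A y y)
    (h : ColoredPath A c x x m) : m = 0 := by
  cases h with
  | nil => rfl
  | cons hxy hy => exact absurd (TransGen.head' hxy hy.reflTransGen) (hacyc _)

theorem of_range_map (k : ℕ) (p : ℕ → V) (hp : ∀ i, i < k → A (p i) (p (i + 1))) :
    ColoredPath A c (p 0) (p k) ((List.range k).map fun i => c (p i) (p (i + 1))) := by
  induction k with
  | zero => exact nil _
  | succ k ih =>
    have hlast : ColoredPath A c (p k) (p (k + 1)) ↑[c (p k) (p (k + 1))] :=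
      cons (hp k k.lt_succ_self) (nil _)
    rw [List.range_succ, List.map_append, ← Multiset.coe_add]
    exact (ih fun i hi => hp i (hi.trans k.lt_succ_self)).trans hlast

end ColoredPath

theorem not_transGen_self_of_wellFounded_flip (hwf : WellFounded (flip A)) (x : V) :
    ¬ TransGen A x x :=
  fun h => hwf.transGen.irrefl.irrefl x (transGen_swap.2 h)

theorem wellFounded_flip_of_acyclic [Finite V] (hacyc : ∀ x : V, ¬ TransGen A x x) :
    WellFounded (flip A) :=
  have : IsTrans V (flip (TransGen A)) := ⟨fun _ _ _ hab hbc => hbc.trans hab⟩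
  have : Std.Irrefl (flip (TransGen A)) := ⟨hacyc⟩
  (Finite.wellFounded_of_trans_of_irrefl (flip (TransGen A))).mono fun _ _ h => TransGen.single h

theorem reflTransGen_of_forall_sink_eq (hwf : WellFounded (flip A)) {s : V}
    (hs_uniq : ∀ t : V, (∀ w : V, ¬ A t w) → t = s) (x : V) : ReflTransGen A x s := by
  induction x using hwf.induction with
  | _ x ih =>
    by_cases hsink : ∃ w, A x w
    · obtain ⟨w, hxw⟩ := hsink
      exact .head hxw (ih w hxw)
    · exact hs_uniq x (not_exists.mp hsink) ▸ .refl

theorem ColoredPath.eq_of_target_reachable (hwf : WellFounded (flip A)) (hU : UColoring A c)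
    {s : V} (hreach : ∀ x, ReflTransGen A x s) (x : V) {m m' : Multiset κ}
    (h : ColoredPath A c x s m) (h' : ColoredPath A c x s m') : m = m' := by
  have hacyc := not_transGen_self_of_wellFounded_flip hwf
  induction x using hwf.induction generalizing m m' with
  | _ x ih =>
    cases h with
    | nil => exact (eq_zero_of_self hacyc h').symm
    | @cons _ u _ m₁ hxu hu =>
      cases h' with
      | nil => exact eq_zero_of_self hacyc (cons hxu hu)
      | @cons _ w _ m₂ hxw hw =>
        by_cases huw : u = w
        · subst huw
          rw [ih u hxu hu hw]
        · obtain ⟨y, huy, hwy, hcu, hcw⟩ := hU.2 x u w hxu hxw huw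
          obtain ⟨q, hq⟩ := exists_of_reflTransGen (c := c) (hreach y)
          rw [ih u hxu hu (cons huy hq), ih w hxw hw (cons hwy hq), hcu, hcw,
            Multiset.cons_swap]

theorem ColoredPath.eq_of_reachable (hwf : WellFounded (flip A)) (hU : UColoring A c)
    {s : V} (hreach : ∀ x, ReflTransGen A x s) {x z : V} {m m' : Multiset κ}
    (h : ColoredPath A c x z m) (h' : ColoredPath A c x z m') : m = m' := by
  obtain ⟨q, hq⟩ := exists_of_reflTransGen (c := c) (hreach z)
  exact add_right_cancel (eq_of_target_reachable hwf hU hreach x (h.trans hq) (h'.trans hq))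

end

theorem stmt_2_general {V κ : Type} [Fintype V] (A : V → V → Prop) (c : V → V → κ)
    (hacyc : ∀ x : V, ¬ Relation.TransGen A x x)
    (hU : UColoring A c)
    (s : V) (hs_uniq : ∀ t : V, (∀ w : V, ¬ A t w) → t = s)
    (x z : V) (k k' : ℕ) (p p' : ℕ → V)
    (hp0 : p 0 = x) (hpk : p k = z) (hp : ∀ i, i < k → A (p i) (p (i + 1)))
    (hp0' : p' 0 = x) (hpk' : p' k' = z) (hp' : ∀ i, i < k' → A (p' i) (p' (i + 1))) :
    (((List.range k).map (fun i => c (p i) (p (i + 1)))) : Multiset κ) =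
      (((List.range k').map (fun i => c (p' i) (p' (i + 1)))) : Multiset κ) := by
  have hwf := wellFounded_flip_of_acyclic hacyc
  have hpath := ColoredPath.of_range_map (c := c) k p hp
  have hpath' := ColoredPath.of_range_map (c := c) k' p' hp'
  rw [hp0, hpk] at hpath
  rw [hp0', hpk'] at hpath'
  exact ColoredPath.eq_of_reachable hwf hU (reflTransGen_of_forall_sink_eq hwf hs_uniq) hpath hpath'

/-- In a finite, connected, acyclic U-colored digraph with unique sink `s`,
any two directed paths from `x` to a common vertex `z` carry the same
multiset of colors. -/
theorem stmt_2 {V κ : Type} [Fintype V] (A : V → V → Prop) (c : V → V → κ)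
    (hconn : ∀ x y : V, Relation.ReflTransGen (fun a b => A a b ∨ A b a) x y)
    (hacyc : ∀ x : V, ¬ Relation.TransGen A x x)
    (hU : UColoring A c)
    (s : V) (hs : ∀ w : V, ¬ A s w) (hs_uniq : ∀ t : V, (∀ w : V, ¬ A t w) → t = s)
    (x z : V) (k k' : ℕ) (p p' : ℕ → V)
    (hp0 : p 0 = x) (hpk : p k = z) (hp : ∀ i, i < k → A (p i) (p (i + 1)))
    (hp0' : p' 0 = x) (hpk' : p' k' = z) (hp' : ∀ i, i < k' → A (p' i) (p' (i + 1))) :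
    (((List.range k).map (fun i => c (p i) (p (i + 1)))) : Multiset κ) =
      (((List.range k').map (fun i => c (p' i) (p' (i + 1)))) : Multiset κ) :=
  stmt_2_general A c hacyc hU s hs_uniq x z k k' p p' hp0 hpk hp hp0' hpk' hp'
end

section
/- Let D be a finite, connected, acyclic digraph admitting a U-coloring. Then any two directed paths between the same pair of vertices have the same length; consequently D is transitively reduced, i.e., D is the Hasse diagram (cover graph) of the poset given by its reachability relation. -/
namespace StmtAux3

variable {V : Type} {A : V → V → Prop}

def Reach (A : V → V → Prop) (x z : V) (k : ℕ) : Prop :=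
  ∃ p : ℕ → V, p 0 = x ∧ p k = z ∧ ∀ i, i < k → A (p i) (p (i + 1))

lemma reach_zero {x z : V} (h : Reach A x z 0) : x = z := by
  obtain ⟨p, h1, h2, _⟩ := h; rw [← h1, h2]

lemma reach_refl (x : V) : Reach A x x 0 :=
  ⟨fun _ => x, rfl, rfl, fun i hi => absurd hi (Nat.not_lt_zero i)⟩

lemma reach_succ_iff {x z : V} {k : ℕ} :
    Reach A x z (k + 1) ↔ ∃ u, A x u ∧ Reach A u z k := by
  constructor
  · rintro ⟨p, h0, hk, hs⟩
    exact ⟨p 1, h0 ▸ hs 0 (Nat.succ_pos k), fun i => p (i + 1), rfl, hk,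
      fun i hi => hs (i + 1) (by omega)⟩
  · rintro ⟨u, hxu, p, h0, hk, hs⟩
    refine ⟨fun i => if i = 0 then x else p (i - 1), rfl, by simp [hk], ?_⟩
    intro i hi
    cases i with
    | zero => simpa [h0] using hxu
    | succ j => simpa using hs j (by omega)

lemma reach_single {x z : V} (h : A x z) : Reach A x z 1 :=
  reach_succ_iff.mpr ⟨z, h, reach_refl z⟩

lemma reach_append {x y z : V} {k m : ℕ} (h1 : Reach A x y k) (h2 : Reach A y z m) :
    Reach A x z (k + m) := by
  induction k generalizing x with
  | zero => rw [reach_zero h1]; simpa using h2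
  | succ n ih =>
    obtain ⟨u, hxu, hu⟩ := reach_succ_iff.mp h1
    have : Reach A x z (n + m + 1) := reach_succ_iff.mpr ⟨u, hxu, ih hu⟩
    have he : n + 1 + m = n + m + 1 := by omega
    rwa [he]

lemma reach_transGen {x z : V} {k : ℕ} (hk : k ≠ 0) (h : Reach A x z k) :
    Relation.TransGen A x z := by
  induction k generalizing x with
  | zero => exact absurd rfl hk
  | succ n ih =>
    obtain ⟨u, hxu, hu⟩ := reach_succ_iff.mp h
    rcases Nat.eq_zero_or_pos n with hn | hn
    · subst hn; rw [← reach_zero hu]; exact Relation.TransGen.single hxu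
    · exact Relation.TransGen.head hxu (ih (by omega) hu)

lemma reach_of_transGen {x z : V} (h : Relation.TransGen A x z) :
    ∃ m, 1 ≤ m ∧ Reach A x z m := by
  induction h with
  | single h => exact ⟨1, le_refl 1, reach_single h⟩
  | tail _ h2 ih =>
    obtain ⟨m, hm, hr⟩ := ih
    exact ⟨m + 1, by omega, reach_append hr (reach_single h2)⟩

lemma strip (hd : ∀ v a b : V, A v a → A v b → a ≠ b → ∃ t, A a t ∧ A b t) :
    ∀ (m : ℕ) (u z1 z : V), A u z1 → Reach A u z m →
      (∃ j, j + 1 = m ∧ Reach A z1 z j) ∨ (∃ t, Reach A z1 t m ∧ A z t) := by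
  intro m
  induction m with
  | zero =>
    intro u z1 z h1 h2
    exact Or.inr ⟨z1, reach_refl z1, (reach_zero h2) ▸ h1⟩
  | succ m ih =>
    intro u z1 z h1 h2
    obtain ⟨a, hua, ha⟩ := reach_succ_iff.mp h2
    by_cases he : z1 = a
    · exact Or.inl ⟨m, rfl, he ▸ ha⟩
    · obtain ⟨c, hz1c, hac⟩ := hd u z1 a h1 hua he
      rcases ih a c z hac ha with ⟨j, hj, hr⟩ | ⟨t, hr, hzt⟩
      · exact Or.inl ⟨j + 1, by omega, reach_succ_iff.mpr ⟨c, hz1c, hr⟩⟩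
      · exact Or.inr ⟨t, reach_succ_iff.mpr ⟨c, hz1c, hr⟩, hzt⟩

lemma eq_lengths [Fintype V] (hacyc : ∀ x : V, ¬ Relation.TransGen A x x)
    (hd : ∀ v a b : V, A v a → A v b → a ≠ b → ∃ t, A a t ∧ A b t) :
    ∀ (x z : V) (k k' : ℕ), Reach A x z k → Reach A x z k' → k = k' := by
  have hself : ∀ (a : V) (n : ℕ), Reach A a a n → n = 0 := by
    intro a n h
    by_contra hn
    exact hacyc a (reach_transGen hn h)
  have hwf : WellFounded (fun a b : V => Relation.TransGen A b a) := by
    have h1 : IsTrans V (fun a b : V => Relation.TransGen A b a) :=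
      ⟨fun a b c h1 h2 => h2.trans h1⟩
    have h2 : IsIrrefl V (fun a b : V => Relation.TransGen A b a) :=
      ⟨fun a h => hacyc a h⟩
    exact Finite.wellFounded_of_trans_of_irrefl _
  intro x
  induction x using hwf.induction with
  | _ x IH =>
    intro z k k' hk hk'
    cases k with
    | zero =>
      have hxz := reach_zero hk
      subst hxz
      exact (hself x k' hk').symm
    | succ k1 =>
      cases k' with
      | zero =>
        have hxz := reach_zero hk'
        subst hxz
        exact hself x (k1 + 1) hk
      | succ k2 =>
        obtain ⟨u, hxu, hu⟩ := reach_succ_iff.mp hk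
        obtain ⟨w, hxw, hw⟩ := reach_succ_iff.mp hk'
        by_cases huw : u = w
        · subst huw
          have := IH u (Relation.TransGen.single hxu) z k1 k2 hu hw
          omega
        · obtain ⟨z1, huz1, hwz1⟩ := hd x u w hxu hxw huw
          have IHz1 := IH z1 (Relation.TransGen.head hxu (Relation.TransGen.single huz1))
          rcases strip hd k1 u z1 z huz1 hu with ⟨j, hj, hr⟩ | ⟨t, hr, hzt⟩ <;>
            rcases strip hd k2 w z1 z hwz1 hw with ⟨j', hj', hr'⟩ | ⟨t', hr', hzt'⟩
          · have := IHz1 z j j' hr hr'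
            omega
          · have h1 : Reach A z1 t' (j + 1) := reach_append hr (reach_single hzt')
            have := IHz1 t' (j + 1) k2 h1 hr'
            omega
          · have h1 : Reach A z1 t (j' + 1) := reach_append hr' (reach_single hzt)
            have := IHz1 t k1 (j' + 1) hr h1
            omega
          · by_cases htt : t = t'
            · subst htt
              have := IHz1 t k1 k2 hr hr'
              omega
            · obtain ⟨s, hts, ht's⟩ := hd z t t' hzt hzt' htt
              have h1 : Reach A z1 s (k1 + 1) := reach_append hr (reach_single hts)
              have h2 : Reach A z1 s (k2 + 1) := reach_append hr' (reach_single ht's)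
              have := IHz1 s (k1 + 1) (k2 + 1) h1 h2
              omega

end StmtAux3

/-- In a finite, connected, acyclic digraph admitting a U-coloring, any two
directed paths between the same pair of vertices have the same length;
consequently the digraph is exactly the cover (Hasse) relation of its
reachability order. -/
theorem stmt_3 {V κ : Type} [Fintype V] (A : V → V → Prop) (c : V → V → κ)
    (hconn : ∀ x y : V, Relation.ReflTransGen (fun a b => A a b ∨ A b a) x y)
    (hacyc : ∀ x : V, ¬ Relation.TransGen A x x)
    (hU : UColoring A c) :
    (∀ (x z : V) (k k' : ℕ) (p p' : ℕ → V),
       p 0 = x → p k = z → (∀ i, i < k → A (p i) (p (i + 1))) →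
       p' 0 = x → p' k' = z → (∀ i, i < k' → A (p' i) (p' (i + 1))) →
       k = k') ∧
    (∀ x z : V, A x z ↔
       (Relation.TransGen A x z ∧ ¬ ∃ w : V, Relation.TransGen A x w ∧ Relation.TransGen A w z)) := by
  have hd : ∀ v a b : V, A v a → A v b → a ≠ b → ∃ t, A a t ∧ A b t := by
    intro v a b h1 h2 hne
    obtain ⟨t, ht1, ht2, _, _⟩ := hU.2 v a b h1 h2 hne
    exact ⟨t, ht1, ht2⟩
  have hlen := StmtAux3.eq_lengths hacyc hd
  constructor
  · intro x z k k' p p' h0 hk hs h0' hk' hs'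
    exact hlen x z k k' ⟨p, h0, hk, hs⟩ ⟨p', h0', hk', hs'⟩
  · intro x z
    constructor
    · intro hxz
      refine ⟨Relation.TransGen.single hxz, ?_⟩
      rintro ⟨w, hxw, hwz⟩
      obtain ⟨m, hm, hmr⟩ := StmtAux3.reach_of_transGen hxw
      obtain ⟨n, hn, hnr⟩ := StmtAux3.reach_of_transGen hwz
      have := hlen x z 1 (m + n) (StmtAux3.reach_single hxz) (StmtAux3.reach_append hmr hnr)
      omega
    · rintro ⟨ht, hno⟩
      obtain ⟨b, hxb, hbz⟩ := Relation.TransGen.head'_iff.mp ht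
      rcases (Relation.reflTransGen_iff_eq_or_transGen.mp hbz) with hbz | hbz
      · rw [hbz]; exact hxb
      · exact absurd ⟨b, Relation.TransGen.single hxb, hbz⟩ hno
end

section
/- Let P be a finite poset whose cover graph (with arcs directed from smaller to larger element) admits a U-coloring with colors 1,…,k, and suppose P has a global minimum 0. Define γ : P → ℕ^k by letting γ_i(x) be the multiplicity of color i on any directed path from 0 to x in the cover graph (this is well-defined). Then γ is an order embedding of P into ℕ^k with the componentwise (dominance) order: x ≤ y in P if and only if γ(x) ≤ γ(y) componentwise. -/
section Aux

variable {P : Type} [PartialOrder P] {k : ℕ} (c : P → P → Fin k)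

/-- Directed cover paths with color counts. -/
inductive CPath : P → P → (Fin k → ℕ) → Prop
  | nil (v : P) {g : Fin k → ℕ} (hg : ∀ j, g j = 0) : CPath v v g
  | cons {v u w : P} {f g : Fin k → ℕ} (h : v ⋖ u) (hp : CPath u w f)
      (hg : ∀ j, g j = f j + if j = c v u then 1 else 0) : CPath v w g

variable {c}

lemma CPath.congr {v w : P} {f g : Fin k → ℕ} (hp : CPath c v w f)
    (h : ∀ j, f j = g j) : CPath c v w g := by
  induction hp generalizing g with
  | nil v hg => exact .nil v (fun j => (h j).symm.trans (hg j))
  | cons h1 hp hg ih => exact .cons h1 hp (fun j => (h j).symm.trans (hg j))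

lemma CPath.le {v w : P} {f : Fin k → ℕ} (hp : CPath c v w f) : v ≤ w := by
  induction hp with
  | nil => exact le_rfl
  | cons h1 _ _ ih => exact h1.le.trans ih

lemma CPath.eq_of_zero {v w : P} {f : Fin k → ℕ} (hp : CPath c v w f)
    (h : ∀ j, f j = 0) : v = w := by
  cases hp with
  | nil => rfl
  | @cons _ u _ f' _ h1 hp hg =>
    exfalso
    have h2 := hg (c v u)
    rw [h (c v u)] at h2
    simp at h2

lemma CPath.append {v u w : P} {f g h : Fin k → ℕ} (hp : CPath c v u f)
    (hq : CPath c u w g) (hh : ∀ j, h j = f j + g j) : CPath c v w h := by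
  induction hp generalizing h with
  | nil v hg0 => exact hq.congr (fun j => by rw [hh j, hg0 j, Nat.zero_add])
  | @cons v u1 w1 f1 g1 h1 hp hg ih =>
    refine .cons h1 (ih hq (fun j => rfl)) (fun j => ?_)
    rw [hh j, hg j]
    omega

lemma CPath.single {v u : P} (h : v ⋖ u) :
    CPath c v u (fun j => if j = c v u then 1 else 0) :=
  .cons h (.nil u (fun _ => rfl)) (fun j => by simp)

lemma CPath.ofIndexed (n : ℕ) (p : ℕ → P) (hc : ∀ i, i < n → p i ⋖ p (i + 1)) :
    CPath c (p 0) (p n)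
      (fun j => ((List.range n).filter (fun i => c (p i) (p (i + 1)) = j)).length) := by
  induction n with
  | zero => exact .nil _ (fun j => by simp)
  | succ n ih =>
    have h1 : CPath c (p 0) (p n)
        (fun j => ((List.range n).filter (fun i => c (p i) (p (i + 1)) = j)).length) :=
      ih (fun i hi => hc i (Nat.lt_succ_of_lt hi))
    have h2 : CPath c (p n) (p (n + 1))
        (fun j => if j = c (p n) (p (n + 1)) then 1 else 0) :=
      CPath.single (hc n (Nat.lt_succ_self n))
    refine h1.append h2 (fun j => ?_)
    rw [List.range_succ, List.filter_append, List.length_append]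
    have e3 : (List.filter (fun i => decide (c (p i) (p (i + 1)) = j)) [n]).length
        = if j = c (p n) (p (n + 1)) then 1 else 0 := by
      by_cases h : c (p n) (p (n + 1)) = j
      · rw [if_pos h.symm]
        simp [h]
      · rw [if_neg (fun e => h e.symm)]
        simp [h]
    rw [e3]

lemma CPath.toIndexed {v w : P} {f : Fin k → ℕ} (hp : CPath c v w f) :
    ∃ (n : ℕ) (p : ℕ → P), p 0 = v ∧ p n = w ∧ (∀ i, i < n → p i ⋖ p (i + 1)) ∧
      ∀ j, f j = ((List.range n).filter (fun i => c (p i) (p (i + 1)) = j)).length := by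
  induction hp with
  | nil v hg => exact ⟨0, fun _ => v, rfl, rfl, by omega, fun j => by simp [hg j]⟩
  | @cons v u w f g h1 hp hg ih =>
    obtain ⟨n, p, hp0, hpn, hcov, hcnt⟩ := ih
    set q : ℕ → P := fun i => if i = 0 then v else p (i - 1) with hqdef
    have hq0 : q 0 = v := by simp [hqdef]
    have hqs : ∀ i, q (i + 1) = p i := by intro i; simp [hqdef]
    refine ⟨n + 1, q, hq0, by rw [hqs n, hpn], ?_, ?_⟩
    · intro i hi
      rcases Nat.eq_zero_or_pos i with h0 | h0
      · subst h0; rw [hq0, hqs 0, hp0]; exact h1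
      · obtain ⟨m, rfl⟩ := Nat.exists_eq_add_of_lt h0
        rw [Nat.zero_add, hqs m, hqs (m + 1)]
        exact hcov m (by omega)
    · intro j
      rw [hg j, hcnt j, List.range_succ_eq_map]
      simp only [List.filter_cons]
      have e2 : (List.filter (fun i => decide (c (q i) (q (i + 1)) = j))
            ((List.range n).map Nat.succ)).length
          = (List.filter (fun i => decide (c (p i) (p (i + 1)) = j)) (List.range n)).length := by
        rw [List.filter_map, List.length_map]
        congr 1
      have ec : c (q 0) (q (0 + 1)) = c v u := by rw [hq0, hqs 0, hp0]
      rw [ec]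
      by_cases hj : c v u = j
      · rw [if_pos (decide_eq_true hj), List.length_cons, if_pos hj.symm, e2]
      · rw [if_neg (fun h => hj (of_decide_eq_true h)), e2,
          if_neg (fun e => hj e.symm)]
        exact Nat.add_zero _

lemma exists_cpath_of_le [Fintype P] {v w : P} (h : v ≤ w) : ∃ f, CPath c v w f := by
  have hwf : WellFoundedGT P := inferInstance
  induction v using WellFoundedGT.induction with
  | _ v ih =>
    rcases eq_or_lt_of_le h with rfl | hlt
    · exact ⟨_, CPath.nil v (fun _ => rfl)⟩
    · obtain ⟨z, hvz, hzw⟩ := exists_covBy_le_of_lt hlt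
      obtain ⟨f, hf⟩ := ih z hvz.lt hzw
      exact ⟨_, CPath.cons hvz hf (fun j => rfl)⟩

lemma strip (hU : UColoring (· ⋖ ·) c) {v w : P} {β : Fin k → ℕ}
    (hp : CPath c v w β) : ∀ u : P, v ⋖ u →
    (β (c v u) ≠ 0 → ∃ g, CPath c u w g ∧ ∀ j, β j = g j + if j = c v u then 1 else 0) ∧
    (β (c v u) = 0 → ∃ z, w ⋖ z ∧ c w z = c v u ∧ CPath c u z β) := by
  induction hp with
  | nil v hg =>
    intro u hvu
    refine ⟨fun hne => absurd (hg _) hne, fun _ => ⟨u, hvu, rfl, .nil u hg⟩⟩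
  | @cons v u' w β' β hvu' hp' hg ih =>
    intro u hvu
    by_cases huu : u' = u
    · subst huu
      constructor
      · intro _
        exact ⟨β', hp', hg⟩
      · intro h0
        exfalso
        have := hg (c v u')
        simp at this
        omega
    · have hne : c v u ≠ c v u' := hU.1 v u u' hvu hvu' (fun h => huu h.symm)
      obtain ⟨z1, huz1, hu'z1, hc1, hc2⟩ := hU.2 v u u' hvu hvu' (fun h => huu h.symm)
      -- c v u = c u' z1, c v u' = c u z1
      have hβ : β (c v u) = β' (c v u) := by
        have := hg (c v u)
        simp [hne] at this
        omega
      have key := ih z1 hu'z1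
      rw [← hc1] at key
      constructor
      · intro hne0
        have hne0' : β' (c v u) ≠ 0 := by omega
        obtain ⟨g, hgp, hgeq⟩ := key.1 hne0'
        refine ⟨fun j => g j + if j = c u z1 then 1 else 0,
          .cons huz1 hgp (fun j => rfl), fun j => ?_⟩
        rw [hg j, hgeq j, ← hc2]
        have hne' : ¬ c v u' = c v u := fun e => hne e.symm
        by_cases h1 : j = c v u <;> by_cases h2 : j = c v u'
        · exact absurd (h1.symm.trans h2) hne
        · simp [h1, h2, hne]
        · simp [h1, h2, hne']
        · simp [h1, h2]
      · intro h0
        have h0' : β' (c v u) = 0 := by omega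
        obtain ⟨z, hwz, hcz, hpz⟩ := key.2 h0'
        refine ⟨z, hwz, hcz, .cons huz1 (hpz.congr (fun j => rfl)) (fun j => ?_)⟩
        rw [hg j, ← hc2]

lemma confl (hU : UColoring (· ⋖ ·) c) {v u : P} {α : Fin k → ℕ}
    (hpu : CPath c v u α) : ∀ (w : P) (β : Fin k → ℕ), CPath c v w β →
    ∃ (z : P) (δ ε : Fin k → ℕ), CPath c u z δ ∧ CPath c w z ε ∧
      (∀ j, δ j = β j - α j) ∧ (∀ j, ε j = α j - β j) := by
  induction hpu with
  | nil v hg =>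
    intro w β hpw
    refine ⟨w, β, fun _ => 0, hpw, .nil w (fun _ => rfl), fun j => ?_, fun j => ?_⟩
    · rw [hg j]
      omega
    · show (0 : ℕ) = _
      rw [hg j]
      omega
  | @cons v u1 u α' α hvu1 hpu1 hg ih =>
    intro w β hpw
    rcases Nat.eq_zero_or_pos (β (c v u1)) with h0 | h0
    · -- strip case (b)
      obtain ⟨z1, hwz1, hcz1, hpz1⟩ := (strip hU hpw u1 hvu1).2 h0
      obtain ⟨z, δ, ε', hδ, hε', hδeq, hεeq⟩ := ih z1 β hpz1
      refine ⟨z, δ, fun j => ε' j + if j = c w z1 then 1 else 0, hδ,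
        .cons hwz1 hε' (fun j => rfl), fun j => ?_, fun j => ?_⟩
      · rw [hδeq j, hg j]
        by_cases hj : j = c v u1
        · subst hj; simp; omega
        · simp [hj]
      · show ε' j + (if j = c w z1 then 1 else 0) = _
        rw [hεeq j, hg j, hcz1]
        by_cases hj : j = c v u1
        · subst hj; simp; omega
        · simp [hj]
    · -- strip case (a)
      obtain ⟨g, hgp, hgeq⟩ := (strip hU hpw u1 hvu1).1 (by omega)
      obtain ⟨z, δ, ε, hδ, hε, hδeq, hεeq⟩ := ih w g hgp
      refine ⟨z, δ, ε, hδ, hε, fun j => ?_, fun j => ?_⟩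
      · rw [hδeq j, hgeq j, hg j]
        by_cases hj : j = c v u1 <;> simp [hj] <;> omega
      · rw [hεeq j, hgeq j, hg j]
        by_cases hj : j = c v u1 <;> simp [hj] <;> omega

end Aux

/-- Let `P` be a finite poset with least element whose cover graph carries a
U-coloring with colors in `Fin k`, and let `γ x j` count the arcs of color `j`
on any directed cover-path from `⊥` to `x` (this is well defined). Then `γ`
is an order embedding into `Fin k → ℕ` with the componentwise order. -/
theorem stmt_4 {P : Type} [PartialOrder P] [Fintype P] [OrderBot P] (k : ℕ)
    (c : P → P → Fin k) (hU : UColoring (· ⋖ ·) c)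
    (γ : P → Fin k → ℕ)
    (hpath : ∀ x : P, ∃ (n : ℕ) (p : ℕ → P),
      p 0 = ⊥ ∧ p n = x ∧ ∀ i, i < n → p i ⋖ p (i + 1))
    (hγ : ∀ (x : P) (n : ℕ) (p : ℕ → P), p 0 = ⊥ → p n = x →
      (∀ i, i < n → p i ⋖ p (i + 1)) →
      ∀ j : Fin k,
        γ x j = ((List.range n).filter (fun i => c (p i) (p (i + 1)) = j)).length) :
    ∀ x y : P, x ≤ y ↔ γ x ≤ γ y := by
  -- γ is realized by a path from ⊥ to x
  have γpath : ∀ x : P, CPath c ⊥ x (γ x) := by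
    intro x
    obtain ⟨n, p, hp0, hpn, hcov⟩ := hpath x
    have h := CPath.ofIndexed (c := c) n p hcov
    rw [hp0, hpn] at h
    exact h.congr (fun j => ((hγ x n p hp0 hpn hcov j)).symm)
  -- γ is the count function of any path from ⊥ to x
  have γuniq : ∀ (x : P) (f : Fin k → ℕ), CPath c ⊥ x f → ∀ j, f j = γ x j := by
    intro x f hf j
    obtain ⟨n, p, hp0, hpn, hcov, hcnt⟩ := hf.toIndexed
    rw [hcnt j, hγ x n p hp0 hpn hcov j]
  intro x y
  constructor
  · intro hxy
    obtain ⟨f, hf⟩ := exists_cpath_of_le (c := c) hxy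
    have hap := (γpath x).append hf (fun j => rfl)
    have heq := γuniq y _ hap
    intro j
    have h2 : γ x j + f j = γ y j := heq j
    exact le_of_le_of_eq (Nat.le_add_right _ _) h2
  · intro hle
    obtain ⟨z, δ, ε, hδ, hε, hδeq, hεeq⟩ := confl hU (γpath x) y (γ y) (γpath y)
    have hε0 : ∀ j, ε j = 0 := by
      intro j
      have h2 : γ x j ≤ γ y j := hle j
      rw [hεeq j]
      exact Nat.sub_eq_zero_of_le h2
    have : y = z := hε.eq_of_zero hε0
    exact this ▸ hδ.le
end

section
/- Let P be a finite poset with global minimum 0 whose cover graph admits a U-coloring with k colors, and let γ : P → ℕ^k be the path-color-count embedding. Then for all y, z ∈ P there exists w ∈ P with γ(w) equal to the componentwise maximum of γ(y) and γ(z); i.e., the image γ(P) is closed under componentwise join in ℕ^k. -/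
/-- With `γ` the path-color-count map of a U-colored cover graph of a finite
poset with `⊥`, the image of `γ` is closed under componentwise join:
for all `y z` there is `w` with `γ w = γ y ⊔ γ z`. -/
theorem stmt_5 {P : Type} [PartialOrder P] [Fintype P] [OrderBot P] (k : ℕ)
    (c : P → P → Fin k) (hU : UColoring (· ⋖ ·) c)
    (γ : P → Fin k → ℕ)
    (hpath : ∀ x : P, ∃ (n : ℕ) (p : ℕ → P),
      p 0 = ⊥ ∧ p n = x ∧ ∀ i, i < n → p i ⋖ p (i + 1))
    (hγ : ∀ (x : P) (n : ℕ) (p : ℕ → P), p 0 = ⊥ → p n = x →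
      (∀ i, i < n → p i ⋖ p (i + 1)) →
      ∀ j : Fin k,
        γ x j = ((List.range n).filter (fun i => c (p i) (p (i + 1)) = j)).length) :
    ∀ y z : P, ∃ w : P, γ w = γ y ⊔ γ z := by
  -- Step lemma
  have step : ∀ v u : P, v ⋖ u → ∀ j, γ u j = γ v j + (if c v u = j then 1 else 0) := by
    intro v u hvu j
    obtain ⟨n, p, h0, hn, hc⟩ := hpath v
    set p' : ℕ → P := fun i => if i ≤ n then p i else u with hp'
    have h0' : p' 0 = ⊥ := by simp [hp', h0]
    have hn' : p' (n + 1) = u := by simp [hp']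
    have hc' : ∀ i, i < n + 1 → p' i ⋖ p' (i + 1) := by
      intro i hi
      rcases Nat.lt_succ_iff_lt_or_eq.mp hi with h | h
      · have : p' i = p i := by simp [hp', Nat.le_of_lt h]
        have h2 : p' (i + 1) = p (i + 1) := by
          simp only [hp']; rw [if_pos (by omega)]
        rw [this, h2]; exact hc i h
      · subst h
        have : p' i = v := by simp [hp', hn]
        rw [this, hn']; exact hvu
    have hu := hγ u (n + 1) p' h0' hn' hc' j
    have hv := hγ v n p h0 hn hc j
    rw [hu, hv]
    rw [List.range_succ, List.filter_append, List.length_append]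
    congr 1
    · congr 1
      apply List.filter_congr
      intro i hi
      have hi' : i < n := List.mem_range.mp hi
      have e1 : p' i = p i := by simp [hp', Nat.le_of_lt hi']
      have e2 : p' (i + 1) = p (i + 1) := by
        simp only [hp']; rw [if_pos (by omega)]
      rw [e1, e2]
    · have e1 : p' n = v := by simp [hp', hn]
      simp only [List.filter_singleton, e1, hn']
      split_ifs with h <;> simp_all
  -- reachability
  set R : P → P → Prop := Relation.ReflTransGen (· ⋖ ·) with hR
  have mono : ∀ {v z : P}, R v z → ∀ j, γ v j ≤ γ z j := by
    intro v z h
    induction h with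
    | refl => intro j; exact le_refl _
    | tail h1 h2 ih =>
      intro j
      calc γ v j ≤ _ := ih j
        _ ≤ _ := by rw [step _ _ h2 j]; omega
  -- pushout lemma
  have pushout : ∀ {a z : P}, R a z → ∀ u, a ⋖ u →
      ∃ w, R u w ∧ ∀ j, γ w j = max (γ u j) (γ z j) := by
    intro a z h
    induction h using Relation.ReflTransGen.head_induction_on with
    | refl =>
      intro u hu
      refine ⟨u, Relation.ReflTransGen.refl, fun j => ?_⟩
      have := step _ _ hu j
      omega
    | head h' hrest ih =>
      rename_i a q1
      intro u hu
      by_cases hq : u = q1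
      · subst hq
        refine ⟨z, hrest, fun j => ?_⟩
        have := mono hrest j
        omega
      · obtain ⟨t, hut, hq1t, hc1, hc2⟩ := hU.2 a u q1 hu h' hq
        obtain ⟨w, hRtw, hw⟩ := ih t hq1t
        refine ⟨w, Relation.ReflTransGen.head hut hRtw, fun j => ?_⟩
        have e1 := hw j
        have e2 : γ t j = γ q1 j + (if c q1 t = j then 1 else 0) := step _ _ hq1t j
        have e3 : γ q1 j = γ a j + (if c a q1 = j then 1 else 0) := step _ _ h' j
        have e4 : γ u j = γ a j + (if c a u = j then 1 else 0) := step _ _ hu j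
        have e5 : γ q1 j ≤ γ z j := mono hrest j
        have hne : c a u ≠ c a q1 := hU.1 a u q1 hu h' hq
        rw [← hc1] at e2
        rw [e1, e2, e3, e4] at *
        split_ifs at * <;> omega
  -- main lemma: two paths from common vertex
  have main : ∀ {v y : P}, R v y → ∀ z, R v z → ∃ w, ∀ j, γ w j = max (γ y j) (γ z j) := by
    intro v y h
    induction h using Relation.ReflTransGen.head_induction_on with
    | refl =>
      intro z hz
      exact ⟨z, fun j => by have := mono hz j; omega⟩
    | head h' hrest ih =>
      rename_i a u
      intro z hz
      obtain ⟨z', hRuz', hz'⟩ := pushout hz u h'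
      obtain ⟨w, hw⟩ := ih z' hRuz'
      refine ⟨w, fun j => ?_⟩
      have := mono hrest j
      have := hz' j
      have := hw j
      omega
  -- convert hpath to R
  have toR : ∀ (n : ℕ) (p : ℕ → P), (∀ i, i < n → p i ⋖ p (i + 1)) → R (p 0) (p n) := by
    intro n
    induction n with
    | zero => intro p _; exact Relation.ReflTransGen.refl
    | succ m ih =>
      intro p hp
      exact Relation.ReflTransGen.tail (ih p fun i hi => hp i (Nat.lt_succ_of_lt hi))
        (hp m (Nat.lt_succ_self m))
  have reach : ∀ x : P, R ⊥ x := by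
    intro x
    obtain ⟨n, p, h0, hn, hc⟩ := hpath x
    have := toR n p hc
    rwa [h0, hn] at this
  intro y z
  obtain ⟨w, hw⟩ := main (reach y) z (reach z)
  exact ⟨w, funext fun j => by rw [Pi.sup_apply]; exact hw j⟩
end

section
/- Every finite poset with a global minimum whose cover graph admits a U-coloring is a lattice. -/
/-!
Given a cover `v ⋖ u` and `v ≤ t`, we show, by induction on `v` downwards and then on `t` upwards,
that `u ⊔ t` exists and, when `u ≰ t`, covers `t` with an edge of the same colour as `v ⋖ u`.
For `v ⋖ x ≤ t` with `x ≠ u`, rule (U2) completes `v, u, x` to a diamond with top `z`, and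
rule (U1) at `x` identifies `z` with the translate `u ⊔ x` of `v ⋖ u` along `v ⋖ x`; translating
`x ⋖ z` further along `x ≤ t` gives `u ⊔ t = z ⊔ t`. When `x = t`, an upper bound `s` of `u` and
`t` not above `z` would receive from `u ⋖ z` and `t ⋖ z` the same translate `z ⊔ s` with the two
colours `c t z = c v u` and `c u z = c v t`, contradicting (U1) at `v`.

Induction on `a` then gives `a ⊔ b`, starting from `⊥ ⊔ b = b`, and in a finite poset with binary
joins the greatest lower bound of `a` and `b` is a maximal common lower bound.
-/

variable {P κ : Type*} [PartialOrder P]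

theorem CovBy.eq_of_covBy_of_le {v u w : P} (hu : v ⋖ u) (hw : v ⋖ w) (h : u ≤ w) : u = w :=
  (hw.eq_or_eq hu.le h).resolve_left hu.ne'

theorem UColoring.eq_of_color_eq {c : P → P → κ} (hU : UColoring (· ⋖ ·) c) {v u w : P}
    (hu : v ⋖ u) (hw : v ⋖ w) (h : c v u = c v w) : u = w :=
  by_contra fun hne => hU.1 v u w hu hw hne h

theorem isLUB_pair_of_le {a b : P} (h : a ≤ b) : IsLUB {a, b} b :=
  ⟨by simp [upperBounds_insert, h], fun _ hs => hs (by simp)⟩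

theorem IsLUB.pair_of_le {a b c d e : P} (hd : IsLUB {a, b} d) (he : IsLUB {d, c} e)
    (hbc : b ≤ c) : IsLUB {a, c} e := by
  refine (isLUB_congr ?_).1 he
  ext x
  simp only [upperBounds_insert, upperBounds_singleton, ← hd.upperBounds_eq, Set.mem_inter_iff,
    Set.mem_Ici]
  exact ⟨fun h => ⟨h.1.1, h.2⟩, fun h => ⟨⟨h.1, hbc.trans h.2⟩, h.2⟩⟩

def IsColoredJoin (c : P → P → κ) (v u t j : P) : Prop :=
  IsLUB {u, t} j ∧ (¬ u ≤ t → t ⋖ j ∧ c t j = c v u)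

theorem UColoring.isLUB_of_diamond {c : P → P → κ} (hU : UColoring (· ⋖ ·) c)
    {v u w z : P} (hvu : v ⋖ u) (hvw : v ⋖ w) (huw : u ≠ w) (huz : u ⋖ z) (hwz : w ⋖ z)
    (hcu : c v u = c w z) (hcw : c v w = c u z)
    (ih : ∀ v', v < v' → ∀ u t, v' ⋖ u → v' ≤ t → ∃ j, IsColoredJoin c v' u t j) :
    IsLUB {u, w} z := by
  refine ⟨by simp [upperBounds_insert, huz.le, hwz.le], fun s hs => ?_⟩
  have hus : u ≤ s := hs (by simp)
  have hws : w ≤ s := hs (by simp)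
  by_contra hzs
  obtain ⟨j, hj, hjc⟩ := ih w hvw.lt z s hwz hws
  obtain ⟨j', hj', hjc'⟩ := ih u hvu.lt z s huz hus
  obtain rfl : j = j' := hj.unique hj'
  refine hU.1 v u w hvu hvw huw ?_
  rw [hcu, hcw, ← (hjc hzs).2, ← (hjc' hzs).2]

theorem UColoring.exists_isColoredJoin [Finite P] {c : P → P → κ} (hU : UColoring (· ⋖ ·) c)
    {v u t : P} (hvu : v ⋖ u) (hvt : v ≤ t) : ∃ j, IsColoredJoin c v u t j := by
  induction v using WellFoundedGT.induction generalizing u t with | _ v ihv =>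
  induction t using WellFoundedLT.induction generalizing u with | _ t iht =>
  by_cases hut : u ≤ t
  · exact ⟨t, isLUB_pair_of_le hut, absurd hut⟩
  rcases hvt.eq_or_lt with rfl | hvt
  · exact ⟨u, Set.pair_comm u v ▸ isLUB_pair_of_le hvu.le, fun _ => ⟨hvu, rfl⟩⟩
  obtain ⟨x, hvx, hxt⟩ := exists_covBy_le_of_lt hvt
  have hux : u ≠ x := fun h => hut (h ▸ hxt)
  obtain ⟨z, huz, hxz, hcu, hcx⟩ := hU.2 v u x hvu hvx hux
  rcases hxt.eq_or_lt with rfl | hxt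
  · exact ⟨z, hU.isLUB_of_diamond hvu hvx hux huz hxz hcu hcx ihv, fun _ => ⟨hxz, hcu.symm⟩⟩
  obtain ⟨j₁, hj₁, hj₁c⟩ := iht x hxt hvu hvx.le
  obtain ⟨hxj₁, hcj₁⟩ := hj₁c fun h => hux (hvu.eq_of_covBy_of_le hvx h)
  obtain rfl : z = j₁ := hU.eq_of_color_eq hxz hxj₁ (hcu.symm.trans hcj₁.symm)
  obtain ⟨j, hj, hjc⟩ := ihv x hvx.lt hxz hxt.le
  obtain ⟨htj, hcj⟩ := hjc fun h => hut (huz.le.trans h)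
  exact ⟨j, hj₁.pair_of_le hj hxt.le, fun _ => ⟨htj, hcj.trans hcu.symm⟩⟩

theorem UColoring.exists_isLUB_pair [Finite P] [OrderBot P] {c : P → P → κ}
    (hU : UColoring (· ⋖ ·) c) (a b : P) : ∃ j, IsLUB {a, b} j := by
  induction a using WellFoundedLT.induction with | _ a ih =>
  rcases eq_bot_or_bot_lt a with rfl | ha
  · exact ⟨b, isLUB_pair_of_le bot_le⟩
  obtain ⟨a', -, ha'a⟩ := exists_le_covBy_of_lt ha
  obtain ⟨j', hj'⟩ := ih a' ha'a.lt
  obtain ⟨j, hj, -⟩ := hU.exists_isColoredJoin ha'a (hj'.1 (by simp))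
  rw [Set.pair_comm] at hj' hj ⊢
  exact ⟨j, hj'.pair_of_le hj ha'a.le⟩

theorem exists_isGLB_of_forall_exists_isLUB_pair [Finite P]
    (hsup : ∀ a b : P, ∃ j, IsLUB {a, b} j) {s : Set P} (hs : (lowerBounds s).Nonempty) :
    ∃ m, IsGLB s m := by
  obtain ⟨m, hm, hmax⟩ := (lowerBounds s).toFinite.exists_maximal hs
  refine ⟨m, hm, fun x hx => ?_⟩
  obtain ⟨j, hj⟩ := hsup x m
  have hjs : j ∈ lowerBounds s := fun y hy => hj.2 (by simp [upperBounds_insert, hx hy, hm hy])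
  exact (hj.1 (by simp)).trans (hmax hjs (hj.1 (by simp)))

/-- Every finite poset with a global minimum whose cover graph admits a
U-coloring is a lattice: every pair of elements has a least upper bound and a
greatest lower bound. -/
theorem stmt_6 {P κ : Type} [PartialOrder P] [Fintype P] [OrderBot P]
    (c : P → P → κ) (hU : UColoring (· ⋖ ·) c) :
    ∀ a b : P, (∃ s : P, IsLUB {a, b} s) ∧ (∃ m : P, IsGLB {a, b} m) := by
  intro a b
  have hsup := hU.exists_isLUB_pair
  exact ⟨hsup a b, exists_isGLB_of_forall_exists_isLUB_pair hsup ⟨⊥, fun _ _ => bot_le⟩⟩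
end

section
/- In a finite upper locally distributive lattice, a comparability x < y is a cover relation if and only if the set of meet-irreducible elements above x exceeds the set of meet-irreducible elements above y by exactly one element, i.e., |M̄_x \ M̄_y| = 1, where M̄_z denotes the set of meet-irreducibles m with m ≥ z. -/
/-!
Every element is the meet of the meet-irreducibles above it, so `z < w` always leaves some
meet-irreducible above `z` but not above `w`; an element `z` strictly between `x` and `y` thus
produces two distinct elements of `Mbar x \ Mbar y`. Conversely, if `x ⋖ y` then every
`m ∈ Mbar x \ Mbar y` satisfies `m ⊓ y = x`, so the minimal representation of `x` lies in
`insert m My`, where `My` represents `y`. Two distinct such `m` would force it into `My`,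
giving `y ≤ x`.
-/

/-- An element of a finite bounded lattice is meet-irreducible if it has
exactly one upper cover or is the top element. -/
def MeetIrredL {P : Type*} [Lattice P] [OrderTop P] (m : P) : Prop :=
  (∃! u : P, m ⋖ u) ∨ m = ⊤

/-- `Mbar z` is the set of meet-irreducible elements above `z`. -/
def Mbar {P : Type*} [Lattice P] [OrderTop P] (z : P) : Set P :=
  {m : P | MeetIrredL m ∧ z ≤ m}

section

variable {P : Type*} [Lattice P] [OrderTop P]

lemma Mbar_antitone : Antitone (Mbar : P → Set P) :=
  fun _ _ hzw _ hm => ⟨hm.1, hzw.trans hm.2⟩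

lemma Mbar_sdiff_nonempty {M : Finset P} {z w : P} (hM_irr : ∀ m ∈ M, MeetIrredL m)
    (hM : z = M.inf id) (hzw : z < w) : (Mbar z \ Mbar w).Nonempty := by
  obtain ⟨m, hmM, hwm⟩ : ∃ m ∈ M, ¬ w ≤ m := by
    by_contra! h
    exact hzw.not_ge (hM ▸ Finset.le_inf h)
  exact ⟨m, ⟨hM_irr m hmM, hM ▸ Finset.inf_le hmM⟩, fun hm => hwm hm.2⟩

lemma covBy_of_Mbar_sdiff_subsingleton
    (hrep : ∀ z : P, ∃ M : Finset P, (∀ m ∈ M, MeetIrredL m) ∧ z = M.inf id)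
    {x y : P} (hxy : x < y) (hsub : (Mbar x \ Mbar y).Subsingleton) : x ⋖ y := by
  refine ⟨hxy, fun z hxz hzy => ?_⟩
  obtain ⟨Mx, hMx_irr, hMx⟩ := hrep x
  obtain ⟨Mz, hMz_irr, hMz⟩ := hrep z
  obtain ⟨m₁, hm₁x, hm₁z⟩ := Mbar_sdiff_nonempty hMx_irr hMx hxz
  obtain ⟨m₂, hm₂z, hm₂y⟩ := Mbar_sdiff_nonempty hMz_irr hMz hzy
  have hm₁ : m₁ ∈ Mbar x \ Mbar y := ⟨hm₁x, fun h => hm₁z (Mbar_antitone hzy.le h)⟩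
  have hm₂ : m₂ ∈ Mbar x \ Mbar y := ⟨Mbar_antitone hxz.le hm₂z, hm₂y⟩
  exact hm₁z (hsub hm₁ hm₂ ▸ hm₂z)

end

lemma CovBy.inf_eq_of_le_of_not_le {L : Type*} [Lattice L] {x y m : L} (hxy : x ⋖ y)
    (hxm : x ≤ m) (hym : ¬ y ≤ m) : m ⊓ y = x :=
  (hxy.eq_or_eq (le_inf hxm hxy.le) inf_le_right).resolve_right
    fun h => hym (h ▸ inf_le_left)

lemma Mbar_sdiff_subsingleton_of_covBy {P : Type*} [Lattice P] [OrderTop P]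
    {Mx My : Finset P} {x y : P} (hMx : x = Mx.inf id)
    (hMx_min : ∀ A : Finset P, (∀ m ∈ A, MeetIrredL m) → x = A.inf id → Mx ⊆ A)
    (hMy_irr : ∀ m ∈ My, MeetIrredL m) (hMy : y = My.inf id) (hxy : x ⋖ y) :
    (Mbar x \ Mbar y).Subsingleton := by
  classical
  have hMx_sub : ∀ m ∈ Mbar x \ Mbar y, Mx ⊆ insert m My := by
    rintro m ⟨⟨hm_irr, hxm⟩, hmy⟩
    refine hMx_min _ (fun a ha => ?_) ?_
    · rcases Finset.mem_insert.mp ha with rfl | ha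
      exacts [hm_irr, hMy_irr a ha]
    · rw [Finset.inf_insert, id, ← hMy,
        hxy.inf_eq_of_le_of_not_le hxm fun hym => hmy ⟨hm_irr, hym⟩]
  intro m₁ hm₁ m₂ hm₂
  by_contra hne
  have hMx_My : Mx ⊆ My := fun a ha => by
    rcases Finset.mem_insert.mp (hMx_sub m₁ hm₁ ha) with rfl | h₁
    · exact (Finset.mem_insert.mp (hMx_sub m₂ hm₂ ha)).resolve_left hne
    · exact h₁
  exact hxy.lt.not_ge (hMx ▸ hMy ▸ Finset.inf_mono hMx_My)

theorem stmt_8_general {P : Type} [Lattice P] [BoundedOrder P]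
    (hULD : ∀ x : P, ∃ M : Finset P, (∀ m ∈ M, MeetIrredL m) ∧ x = M.inf id ∧
      (∀ A : Finset P, (∀ m ∈ A, MeetIrredL m) → x = A.inf id → M ⊆ A))
    (x y : P) (hxy : x < y) :
    x ⋖ y ↔ (Mbar x \ Mbar y).ncard = 1 := by
  have hrep : ∀ z : P, ∃ M : Finset P, (∀ m ∈ M, MeetIrredL m) ∧ z = M.inf id :=
    fun z => (hULD z).imp fun _ hM => ⟨hM.1, hM.2.1⟩
  rw [Set.ncard_eq_one, Set.exists_eq_singleton_iff_nonempty_subsingleton]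
  refine ⟨fun hcov => ⟨?_, ?_⟩, fun h => covBy_of_Mbar_sdiff_subsingleton hrep hxy h.2⟩
  · obtain ⟨Mx, hMx_irr, hMx, -⟩ := hULD x
    exact Mbar_sdiff_nonempty hMx_irr hMx hxy
  · obtain ⟨Mx, -, hMx, hMx_min⟩ := hULD x
    obtain ⟨My, hMy_irr, hMy, -⟩ := hULD y
    exact Mbar_sdiff_subsingleton_of_covBy hMx hMx_min hMy_irr hMy hcov

/-- In a finite upper locally distributive lattice, a comparability `x < y` is
a cover iff exactly one meet-irreducible lies above `x` but not above `y`. -/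
theorem stmt_8 {P : Type} [Lattice P] [Fintype P] [BoundedOrder P]
    (hULD : ∀ x : P, ∃ M : Finset P, (∀ m ∈ M, MeetIrredL m) ∧ x = M.inf id ∧
      (∀ A : Finset P, (∀ m ∈ A, MeetIrredL m) → x = A.inf id → M ⊆ A))
    (x y : P) (hxy : x < y) :
    x ⋖ y ↔ (Mbar x \ Mbar y).ncard = 1 :=
  stmt_8_general hULD x y hxy
end

section
/- If a finite, connected, acyclic digraph D admits both a U-coloring and an L-coloring (a U-coloring of the reversed digraph), then D is the cover graph of a distributive lattice. -/
open Relation Function OrderDual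

theorem Multiset.cons_inter_cons_of_ne {α : Type*} [DecidableEq α] {a b : α} (hab : a ≠ b)
    (s : Multiset α) : (a ::ₘ s) ∩ (b ::ₘ s) = s := by
  ext e
  simp only [Multiset.count_inter, Multiset.count_cons]
  split_ifs with hea heb <;> first | omega | exact absurd (hea.symm.trans heb) hab

theorem Multiset.card_sup_add_card_inf {α : Type*} [DecidableEq α] (s t : Multiset α) :
    card (s ⊔ t) + card (s ⊓ t) = card s + card t := by
  rw [← card_add, sup_eq_union, inf_eq_inter, union_add_inter, card_add]

variable {V κ : Type*} {A : V → V → Prop} {c : V → V → κ} {x y z : V} {s t : Multiset κ}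

inductive PathColors (A : V → V → Prop) (c : V → V → κ) : V → V → Multiset κ → Prop
  | nil (x : V) : PathColors A c x x 0
  | cons {x y z : V} {s : Multiset κ} :
      A x y → PathColors A c y z s → PathColors A c x z (c x y ::ₘ s)

namespace PathColors

theorem append (h : PathColors A c x y s) (h' : PathColors A c y z t) :
    PathColors A c x z (s + t) := by
  induction h with
  | nil => simpa using h'
  | cons hxy _ ih => rw [Multiset.cons_add]; exact .cons hxy (ih h')

theorem eq_of_eq_zero (h : PathColors A c x y s) (hs : s = 0) : x = y := by
  cases h with
  | nil => rfl
  | cons => exact absurd hs (Multiset.cons_ne_zero)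

end PathColors

theorem exists_pathColors (c : V → V → κ) (h : ReflTransGen A x y) :
    ∃ s, PathColors A c x y s := by
  induction h using ReflTransGen.head_induction_on with
  | refl => exact ⟨0, .nil _⟩
  | head hxy _ ih => exact ⟨_, .cons hxy ih.choose_spec⟩

theorem wellFounded_transGen_swap [Finite V] (hacyc : ∀ x, ¬ TransGen A x x) :
    WellFounded (TransGen (swap A)) :=
  haveI : Std.Irrefl (TransGen (swap A)) := ⟨fun x h => hacyc x (transGen_swap.mp h)⟩
  Finite.wellFounded_of_trans_of_irrefl _

theorem exists_sink [Finite V] [Nonempty V] (hacyc : ∀ x, ¬ TransGen A x x) :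
    ∃ T, ∀ u, ¬ A T u := by
  obtain ⟨T, -, hT⟩ := (wellFounded_transGen_swap hacyc).has_min Set.univ
    ⟨Classical.arbitrary V, trivial⟩
  exact ⟨T, fun u h => hT u trivial (transGen_swap.mpr (.single h))⟩

theorem reflTransGen_sink_of_confluent
    (hconf : ∀ a b d, A a b → A a d → ∃ e, ReflGen A b e ∧ ReflTransGen A d e)
    {T : V} (hT : ∀ u, ¬ A T u) (hx : ReflTransGen (fun a b => A a b ∨ A b a) x T) :
    ReflTransGen A x T := by
  have hjoin := equivalence_join_reflTransGen hconf
  obtain ⟨e, hxe, hTe⟩ : Join (ReflTransGen A) x T := by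
    induction hx using ReflTransGen.head_induction_on with
    | refl => exact hjoin.refl _
    | head hab _ ih =>
      refine hjoin.trans ?_ ih
      exact hab.elim (fun h => ⟨_, .single h, .refl⟩) fun h => ⟨_, .refl, .single h⟩
  rcases hTe.cases_head with rfl | ⟨u, hTu, -⟩
  · exact hxe
  · exact absurd hTu (hT u)

theorem covBy_iff_rel_of_rank [PartialOrder V] (hle : ∀ x y : V, x ≤ y ↔ ReflTransGen A x y)
    (ρ : V → ℕ) (hρ : ∀ x y, A x y → ρ y = ρ x + 1) : x ⋖ y ↔ A x y := by
  have hmono : ∀ {x y}, ReflTransGen A x y → ρ x ≤ ρ y := by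
    intro x y h
    induction h with
    | refl => exact le_rfl
    | tail _ hbc ih => have := hρ _ _ hbc; omega
  have hlt : ∀ {x y : V}, A x y → x < y := fun {x y} hxy =>
    lt_of_le_of_ne ((hle x y).mpr (.single hxy)) fun h => by have := hρ _ _ hxy; subst h; omega
  have hstrict : ∀ {x y : V}, x < y → ρ x < ρ y := fun {x y} hxy => by
    obtain ⟨u, hxu, huy⟩ := ((hle x y).mp hxy.le).cases_head.resolve_left hxy.ne
    have := hρ _ _ hxu; have := hmono huy; omega
  constructor
  · rintro ⟨hxy, hbetween⟩
    obtain ⟨u, hxu, huy⟩ := ((hle x y).mp hxy.le).cases_head.resolve_left hxy.ne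
    obtain rfl | hne := eq_or_ne u y
    · exact hxu
    · exact absurd (lt_of_le_of_ne ((hle u y).mpr huy) hne) (hbetween (hlt hxu))
  · intro hxy
    refine ⟨hlt hxy, fun z hxz hzy => ?_⟩
    have := hstrict hxz; have := hstrict hzy; have := hρ _ _ hxy; omega

namespace UColoring

theorem exists_reflGen_reflTransGen (hU : UColoring A c) {a b d : V} (hab : A a b) (had : A a d) :
    ∃ e, ReflGen A b e ∧ ReflTransGen A d e := by
  obtain rfl | hbd := eq_or_ne b d
  · exact ⟨b, .refl, .refl⟩
  · obtain ⟨e, hbe, hde, -⟩ := hU.2 a b d hab had hbd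
    exact ⟨e, .single hbe, .single hde⟩

theorem exists_top [Finite V] [Nonempty V] (hU : UColoring A c)
    (hconn : ∀ x y : V, ReflTransGen (fun a b => A a b ∨ A b a) x y)
    (hacyc : ∀ x, ¬ TransGen A x x) : ∃ T, ∀ x, ReflTransGen A x T := by
  obtain ⟨T, hT⟩ := exists_sink hacyc
  exact ⟨T, fun x => reflTransGen_sink_of_confluent
    (fun _ _ _ => hU.exists_reflGen_reflTransGen) hT (hconn x T)⟩

end UColoring

structure IsUTop (A : V → V → Prop) (c : V → V → κ) (T : V) : Prop where
  acyclic : ∀ x, ¬ TransGen A x x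
  uColoring : UColoring A c
  reflTransGen_top : ∀ x, ReflTransGen A x T

namespace IsUTop

theorem not_top_rel {T : V} (h : IsUTop A c T) (u : V) : ¬ A T u := fun hTu =>
  h.acyclic T (.head' hTu (h.reflTransGen_top u))

variable {T B : V} (h : IsUTop A c T)

/-- The colors along a path from `x` to the top; by `pathColors_eq_content` they do not depend
on the path. -/
noncomputable def content (x : V) : Multiset κ :=
  (exists_pathColors c (h.reflTransGen_top x)).choose

theorem pathColors_content (x : V) : PathColors A c x T (h.content x) :=
  (exists_pathColors c (h.reflTransGen_top x)).choose_spec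

variable [Finite V]

theorem pathColors_eq_content (hs : PathColors A c x T s) : s = h.content x := by
  suffices unique : ∀ x, ∀ {s t}, PathColors A c x T s → PathColors A c x T t → s = t from
    unique x hs (h.pathColors_content x)
  intro x
  induction x using (wellFounded_transGen_swap h.acyclic).induction with
  | _ x ih =>
  have ih' : ∀ {y}, A x y →
      ∀ {s t}, PathColors A c y T s → PathColors A c y T t → s = t :=
    fun hxy => ih _ (transGen_swap.mpr (.single hxy))
  intro s t hs ht
  cases hs with
  | nil => cases ht with
    | nil => rfl
    | cons hTu _ => exact absurd hTu (h.not_top_rel _)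
  | @cons _ y _ s hxy hs => cases ht with
    | nil => exact absurd hxy (h.not_top_rel _)
    | @cons _ w _ t hxw ht =>
      obtain rfl | hyw := eq_or_ne y w
      · rw [ih' hxy hs ht]
      -- Reroute both paths through the diamond on `y`, `w`.
      obtain ⟨z, hyz, hwz, hcy, hcw⟩ := h.uColoring.2 x y w hxy hxw hyw
      obtain ⟨r, hr⟩ := exists_pathColors c (h.reflTransGen_top z)
      rw [ih' hxy hs (.cons hyz hr), ih' hxw ht (.cons hwz hr), ← hcy, ← hcw,
        Multiset.cons_swap]

theorem content_eq_add (hs : PathColors A c x y s) : h.content x = s + h.content y :=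
  (h.pathColors_eq_content (hs.append (h.pathColors_content y))).symm

theorem content_of_rel (hxy : A x y) : h.content x = c x y ::ₘ h.content y :=
  (h.pathColors_eq_content (.cons hxy (h.pathColors_content y))).symm

theorem card_content_of_rel (hxy : A x y) : (h.content x).card = (h.content y).card + 1 := by
  rw [h.content_of_rel hxy, Multiset.card_cons]

theorem content_anti (hxy : ReflTransGen A x y) : h.content y ≤ h.content x := by
  obtain ⟨s, hs⟩ := exists_pathColors c hxy
  rw [h.content_eq_add hs]
  exact le_add_self

theorem eq_of_reflTransGen_of_content_le (hxy : ReflTransGen A x y)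
    (hle : h.content x ≤ h.content y) : x = y := by
  obtain ⟨s, hs⟩ := exists_pathColors c hxy
  rw [h.content_eq_add hs] at hle
  exact hs.eq_of_eq_zero (by simpa using hle)

theorem exists_rel_rel_content_eq_inf [DecidableEq κ] {v a b : V} (hva : A v a) (hvb : A v b)
    (hab : a ≠ b) : ∃ z, A a z ∧ A b z ∧ h.content z = h.content a ⊓ h.content b := by
  obtain ⟨z, haz, hbz, hca, hcb⟩ := h.uColoring.2 v a b hva hvb hab
  refine ⟨z, haz, hbz, ?_⟩
  rw [h.content_of_rel haz, h.content_of_rel hbz, ← hca, ← hcb, Multiset.inf_eq_inter,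
    Multiset.cons_inter_cons_of_ne (h.uColoring.1 v a b hva hvb hab).symm]

theorem exists_join [DecidableEq κ] {v : V} :
    ∀ {x y}, ReflTransGen A v x → ReflTransGen A v y →
      ∃ j, ReflTransGen A x j ∧ ReflTransGen A y j ∧
        h.content j = h.content x ⊓ h.content y := by
  induction v using (wellFounded_transGen_swap h.acyclic).induction with
  | _ v ih =>
  have ih' : ∀ {w}, TransGen A v w → ∀ {x y}, ReflTransGen A w x → ReflTransGen A w y →
      ∃ j, ReflTransGen A x j ∧ ReflTransGen A y j ∧
        h.content j = h.content x ⊓ h.content y :=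
    fun hvw => ih _ (transGen_swap.mpr hvw)
  intro x y hvx hvy
  rcases hvx.cases_head with rfl | ⟨a, hva, hax⟩
  · exact ⟨y, hvy, .refl, (inf_eq_right.mpr (h.content_anti hvy)).symm⟩
  rcases hvy.cases_head with rfl | ⟨b, hvb, hby⟩
  · exact ⟨x, .refl, hvx, (inf_eq_left.mpr (h.content_anti hvx)).symm⟩
  obtain rfl | hab := eq_or_ne a b
  · exact ih' (.single hva) hax hby
  obtain ⟨z, haz, hbz, hz⟩ := h.exists_rel_rel_content_eq_inf hva hvb hab
  obtain ⟨u, hxu, hzu, hu⟩ := ih' (.single hva) hax (.single haz)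
  obtain ⟨w, hyw, hzw, hw⟩ := ih' (.single hvb) hby (.single hbz)
  obtain ⟨j, huj, hwj, hj⟩ := ih' (.tail (.single hva) haz) hzu hzw
  refine ⟨j, hxu.trans huj, hyw.trans hwj, ?_⟩
  have hxa := h.content_anti hax
  have hyb := h.content_anti hby
  rw [hj, hu, hw, hz, inf_inf_inf_comm, inf_idem,
    inf_eq_left.mpr (le_inf (inf_le_left.trans hxa) (inf_le_right.trans hyb))]

theorem content_le_content_iff (hB : ∀ x, ReflTransGen A B x) :
    h.content y ≤ h.content x ↔ ReflTransGen A x y := by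
  classical
  refine ⟨fun hyx => ?_, h.content_anti⟩
  obtain ⟨j, hxj, hyj, hj⟩ := h.exists_join (hB x) (hB y)
  rw [inf_eq_right.mpr hyx] at hj
  rwa [h.eq_of_reflTransGen_of_content_le hyj hj.ge]

theorem content_injective (hB : ∀ x, ReflTransGen A B x) : Injective h.content :=
  fun _ _ hxy => h.eq_of_reflTransGen_of_content_le
    ((h.content_le_content_iff hB).mp hxy.ge) hxy.le

variable {κ' : Type*} {c' : V → V → κ'}

theorem card_content_add_card_content (U : IsUTop A c T) (L : IsUTop (swap A) c' B)
    (hconn : ∀ x y : V, ReflTransGen (fun a b => A a b ∨ A b a) x y) (x y : V) :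
    (U.content x).card + (L.content x).card = (U.content y).card + (L.content y).card := by
  have step : ∀ {a b}, A a b →
      (U.content a).card + (L.content a).card = (U.content b).card + (L.content b).card :=
    fun {a b} hab => by
      have := U.card_content_of_rel hab
      have := L.card_content_of_rel (show swap A b a from hab)
      omega
  induction hconn x y with
  | refl => rfl
  | tail _ hab ih => exact ih.trans (hab.elim step fun hba => (step hba).symm)

theorem content_eq_sup_of_content_eq_inf [DecidableEq κ] [DecidableEq κ']
    (U : IsUTop A c T) (L : IsUTop (swap A) c' B)
    (hconn : ∀ x y : V, ReflTransGen (fun a b => A a b ∨ A b a) x y) {x y m j : V}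
    (hmx : ReflTransGen A m x) (hmy : ReflTransGen A m y)
    (hm : L.content m = L.content x ⊓ L.content y)
    (hxj : ReflTransGen A x j) (hyj : ReflTransGen A y j)
    (hj : U.content j = U.content x ⊓ U.content y) :
    U.content m = U.content x ⊔ U.content y := by
  have hle : U.content x ⊔ U.content y ≤ U.content m :=
    sup_le (U.content_anti hmx) (U.content_anti hmy)
  have hleL : L.content x ⊔ L.content y ≤ L.content j :=
    sup_le (L.content_anti (reflTransGen_swap.mpr hxj))
      (L.content_anti (reflTransGen_swap.mpr hyj))
  refine (Multiset.eq_of_le_of_card_le hle ?_).symm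
  have hsum := U.card_content_add_card_content L hconn
  linarith [hsum m x, hsum j x, hsum y x, congrArg Multiset.card hm, congrArg Multiset.card hj,
    Multiset.card_le_card hleL, Multiset.card_sup_add_card_inf (U.content x) (U.content y),
    Multiset.card_sup_add_card_inf (L.content x) (L.content y)]

end IsUTop

/-- If a finite, connected, acyclic digraph admits both a U-coloring and an
L-coloring (a U-coloring of the reversed digraph), then it is the cover graph
of a distributive lattice: its reachability order is order-isomorphic to a
distributive lattice, with the arcs corresponding exactly to covers. -/
theorem stmt_10 {V κ₁ κ₂ : Type} [Fintype V] [Nonempty V] (A : V → V → Prop)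
    (cU : V → V → κ₁) (cL : V → V → κ₂)
    (hconn : ∀ x y : V, Relation.ReflTransGen (fun a b => A a b ∨ A b a) x y)
    (hacyc : ∀ x : V, ¬ Relation.TransGen A x x)
    (hU : UColoring A cU) (hL : UColoring (fun x y => A y x) cL) :
    ∃ (L : Type) (_ : DistribLattice L) (f : V → L),
      Function.Bijective f ∧
      (∀ x y : V, Relation.ReflTransGen A x y ↔ f x ≤ f y) ∧
      (∀ x y : V, A x y ↔ f x ⋖ f y) := by
  classical
  have hacyc' : ∀ x, ¬ TransGen (swap A) x x := fun x h => hacyc x (transGen_swap.mp h)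
  obtain ⟨T, hT⟩ := hU.exists_top hconn hacyc
  obtain ⟨B, hB⟩ :=
    hL.exists_top (fun x y => ReflTransGen.mono (fun _ _ => Or.symm) _ _ (hconn x y)) hacyc'
  have U : IsUTop A cU T := ⟨hacyc, hU, hT⟩
  have L : IsUTop (swap A) cL B := ⟨hacyc', hL, hB⟩
  have hB' : ∀ x, ReflTransGen A B x := fun x => reflTransGen_swap.mp (hB x)
  choose sup hsup using fun x y => U.exists_join (hB' x) (hB' y)
  choose inf hinf using fun x y =>
    L.exists_join (reflTransGen_swap.mpr (hT x)) (reflTransGen_swap.mpr (hT y))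
  let : Max V := ⟨sup⟩
  let : Min V := ⟨inf⟩
  let : LE V := ⟨ReflTransGen A⟩
  let : LT V := ⟨fun x y => x ≤ y ∧ ¬ y ≤ x⟩
  have hle : ∀ {x y : V}, toDual (U.content x) ≤ toDual (U.content y) ↔ x ≤ y :=
    U.content_le_content_iff hB'
  let : DistribLattice V := Injective.distribLattice (toDual ∘ U.content)
    (toDual.injective.comp (U.content_injective hB')) hle
    (lt_iff_le_not_ge.trans (and_congr hle (not_congr hle)))
    (fun x y => congrArg toDual (hsup x y).2.2)
    (fun x y => congrArg toDual (U.content_eq_sup_of_content_eq_inf L hconn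
      (reflTransGen_swap.mp (hinf x y).1) (reflTransGen_swap.mp (hinf x y).2.1) (hinf x y).2.2
      (hsup x y).1 (hsup x y).2.1 (hsup x y).2.2))
  have hrank : ∀ x y, A x y → (L.content y).card = (L.content x).card + 1 :=
    fun x y hxy => L.card_content_of_rel (show swap A y x from hxy)
  exact ⟨V, inferInstance, id, bijective_id, fun _ _ => Iff.rfl,
    fun _ _ => (covBy_iff_rel_of_rank (fun _ _ => Iff.rfl) _ hrank).symm⟩
end

section
/- A finite lattice is distributive if and only if it is both upper locally distributive and lower locally distributive. -/
/-- Join-irreducible element: exactly one lower cover, or the bottom element. -/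
def JoinIrredL {P : Type*} [Lattice P] [OrderBot P] (m : P) : Prop :=
  (∃! u : P, u ⋖ m) ∨ m = ⊥

/-!
In a distributive lattice join-irreducibles are join-prime, so the maximal join-irreducibles
below `x` occur in every representation of `x` as a join of join-irreducibles; dually for meets.

Conversely, lower local distributivity forces the number of join-irreducibles below `x` to grow by
exactly one along each cover `x ⋖ y` (uniqueness of the minimal representation of `y` pins down
the new one), and dually upper local distributivity makes the number of meet-irreducibles above
`x` drop by exactly one. Their sum is therefore constant, and inclusion–exclusion for these counts
shows that every join-irreducible below `a ⊔ b` lies below `a` or below `b`. Join-irreducibles are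
thus join-prime, which gives distributivity since every element is a join of join-irreducibles.
Meet-irreducibles of `P` are handled as join-irreducibles of `Pᵒᵈ`.
-/

open Finset OrderDual

theorem joinIrredL_iff_supIrred_or_eq_bot {P : Type*} [Lattice P] [OrderBot P] [Finite P] {a : P} :
    JoinIrredL a ↔ SupIrred a ∨ a = ⊥ := by
  refine or_congr_left' fun ha => ⟨fun ⟨u, hu, huniq⟩ => ?_, fun hirr => ?_⟩
  · have le_u : ∀ {b}, b < a → b ≤ u := fun hb => by
      obtain ⟨w, hbw, hw⟩ := exists_le_covBy_of_lt hb
      exact huniq w hw ▸ hbw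
    by_contra hirr
    obtain hmin | ⟨b, c, rfl, hb, hc⟩ := not_supIrred.1 hirr
    · exact hmin.not_lt hu.lt
    · exact hu.lt.not_ge (sup_le (le_u hb) (le_u hc))
  · obtain ⟨u, -, hu⟩ := exists_le_covBy_of_lt (bot_lt_iff_ne_bot.2 ha)
    refine ⟨u, hu, fun v hv => ?_⟩
    by_contra hvu
    obtain h | h := hirr.2 (hv.wcovBy.sup_eq hu.wcovBy hvu)
    · exact hv.lt.ne h
    · exact hu.lt.ne h

theorem joinIrredL_dual_iff {P : Type*} [Lattice P] [OrderTop P] {m : Pᵒᵈ} :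
    JoinIrredL m ↔ MeetIrredL (ofDual m) :=
  or_congr (existsUnique_congr fun _ => ofDual_covBy_ofDual_iff.symm) Iff.rfl

def IsLowerLocallyDistributive (P : Type*) [Lattice P] [OrderBot P] : Prop :=
  ∀ x : P, ∃ J : Finset P, (∀ m ∈ J, JoinIrredL m) ∧ x = J.sup id ∧
    ∀ A : Finset P, (∀ m ∈ A, JoinIrredL m) → x = A.sup id → J ⊆ A

def IsUpperLocallyDistributive (P : Type*) [Lattice P] [OrderTop P] : Prop :=
  ∀ x : P, ∃ M : Finset P, (∀ m ∈ M, MeetIrredL m) ∧ x = M.inf id ∧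
    ∀ A : Finset P, (∀ m ∈ A, MeetIrredL m) → x = A.inf id → M ⊆ A

theorem isLowerLocallyDistributive_dual_iff {P : Type*} [Lattice P] [OrderTop P] :
    IsLowerLocallyDistributive Pᵒᵈ ↔ IsUpperLocallyDistributive P := by
  simp only [IsLowerLocallyDistributive, joinIrredL_dual_iff]
  -- `Finset.sup` in `Pᵒᵈ` unfolds to `Finset.inf` in `P`
  rfl

section IrredBelow

variable {P : Type*} [Lattice P] [Fintype P] {j x y : P}

open Classical in
noncomputable def irredBelow (x : P) : Finset P :=
  {j | SupIrred j ∧ j ≤ x}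

theorem mem_irredBelow : j ∈ irredBelow x ↔ SupIrred j ∧ j ≤ x := by
  classical simp [irredBelow]

theorem irredBelow_mono (h : x ≤ y) : irredBelow x ⊆ irredBelow y := fun _ hj =>
  mem_irredBelow.2 ⟨(mem_irredBelow.1 hj).1, (mem_irredBelow.1 hj).2.trans h⟩

theorem irredBelow_inf [DecidableEq P] (x y : P) :
    irredBelow (x ⊓ y) = irredBelow x ∩ irredBelow y := by
  ext j
  simp only [mem_inter, mem_irredBelow, le_inf_iff]
  tauto

theorem sup_irredBelow [OrderBot P] (x : P) : (irredBelow x).sup id = x := by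
  obtain ⟨s, hs, hirr⟩ := exists_supIrred_decomposition x
  refine le_antisymm (Finset.sup_le fun j hj => (mem_irredBelow.1 hj).2) ?_
  conv_lhs => rw [← hs]
  exact sup_mono fun j hj => mem_irredBelow.2 ⟨hirr hj, hs ▸ le_sup (f := id) hj⟩

theorem IsLowerLocallyDistributive.card_irredBelow_of_covBy [OrderBot P]
    (hP : IsLowerLocallyDistributive P) (h : x ⋖ y) : #(irredBelow y) = #(irredBelow x) + 1 := by
  classical
  obtain ⟨Jy, hJyirr, hy, hJymin⟩ := hP y
  obtain ⟨Jx, hJxirr, hx, -⟩ := hP x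
  obtain ⟨j, hjJ, hjx⟩ : ∃ j ∈ Jy, ¬j ≤ x := by
    by_contra! hle
    exact h.lt.not_ge (hy ▸ Finset.sup_le hle)
  have eq_of_not_le : ∀ k, SupIrred k → k ≤ y → ¬k ≤ x → k = j := by
    intro k hk hky hkx
    have hxk : x ⊔ k = y := (h.eq_or_eq le_sup_left (sup_le h.le hky)).resolve_left
      fun e => hkx (e ▸ le_sup_right)
    have hsub := hJymin (insert k Jx)
      (forall_mem_insert _ _ _ |>.2 ⟨joinIrredL_iff_supIrred_or_eq_bot.2 (.inl hk), hJxirr⟩)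
      (by rw [sup_insert, ← hx, id, sup_comm, hxk])
    rcases mem_insert.1 (hsub hjJ) with e | hjJx
    · exact e.symm
    · exact absurd (hx ▸ le_sup (f := id) hjJx) hjx
  have hj : SupIrred j := (joinIrredL_iff_supIrred_or_eq_bot.1 (hJyirr j hjJ)).resolve_right
    (by rintro rfl; exact hjx bot_le)
  have hinsert : irredBelow y = insert j (irredBelow x) := by
    ext k
    simp only [mem_insert, mem_irredBelow]
    constructor
    · rintro ⟨hk, hky⟩
      by_cases hkx : k ≤ x
      · exact .inr ⟨hk, hkx⟩
      · exact .inl (eq_of_not_le k hk hky hkx)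
    · rintro (rfl | ⟨hk, hkx⟩)
      · exact ⟨hj, hy ▸ le_sup (f := id) hjJ⟩
      · exact ⟨hk, hkx.trans h.le⟩
  rw [hinsert, card_insert_of_notMem fun hj => hjx (mem_irredBelow.1 hj).2]

end IrredBelow

theorem IsLowerLocallyDistributive.of_distribLattice {P : Type*} [DistribLattice P] [OrderBot P]
    [Fintype P] : IsLowerLocallyDistributive P := by
  classical
  intro x
  refine ⟨(irredBelow x).filter (Maximal (· ∈ irredBelow x)), fun j hj => ?_, ?_, ?_⟩
  · exact joinIrredL_iff_supIrred_or_eq_bot.2 (.inl (mem_irredBelow.1 (mem_filter.1 hj).1).1)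
  · refine le_antisymm ?_ (Finset.sup_le fun j hj => (mem_irredBelow.1 (mem_filter.1 hj).1).2)
    conv_lhs => rw [← sup_irredBelow x]
    refine Finset.sup_le fun k hk => ?_
    obtain ⟨m, hkm, hm⟩ := exists_le_maximal _ hk
    exact hkm.trans (le_sup (f := id) (mem_filter.2 ⟨hm.prop, hm⟩))
  · intro A hA hxA j hj
    obtain ⟨hjx, hjmax⟩ := mem_filter.1 hj
    obtain ⟨hjirr, hjx⟩ := mem_irredBelow.1 hjx
    obtain ⟨a, haA, hja⟩ := hjirr.supPrime.le_finset_sup.1 (hxA ▸ hjx)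
    have ha : SupIrred a := (joinIrredL_iff_supIrred_or_eq_bot.1 (hA a haA)).resolve_right
      (ne_bot_of_le_ne_bot hjirr.ne_bot hja)
    rwa [hjmax.eq_of_le (mem_irredBelow.2 ⟨ha, hxA ▸ le_sup (f := id) haA⟩) hja]

section Counting

variable {P : Type*} [Lattice P] [BoundedOrder P] [Fintype P]

theorem card_irredBelow_add_card_irredBelow_toDual (hL : IsLowerLocallyDistributive P)
    (hU : IsLowerLocallyDistributive Pᵒᵈ) (x : P) :
    #(irredBelow x) + #(irredBelow (toDual x)) =
      #(irredBelow (⊥ : P)) + #(irredBelow (toDual (⊥ : P))) := by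
  induction x using WellFoundedLT.induction with
  | _ a ih =>
    obtain rfl | ha := eq_or_ne a ⊥
    · rfl
    obtain ⟨w, -, hw⟩ := exists_le_covBy_of_lt (bot_lt_iff_ne_bot.2 ha)
    have := hL.card_irredBelow_of_covBy hw
    have := hU.card_irredBelow_of_covBy hw.toDual
    have := ih w hw.lt
    omega

theorem irredBelow_sup [DecidableEq P] (hL : IsLowerLocallyDistributive P)
    (hU : IsLowerLocallyDistributive Pᵒᵈ) (a b : P) :
    irredBelow (a ⊔ b) = irredBelow a ∪ irredBelow b := by
  refine (eq_of_subset_of_card_le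
    (union_subset (irredBelow_mono le_sup_left) (irredBelow_mono le_sup_right)) ?_).symm
  have hunion := card_union_add_card_inter (irredBelow a) (irredBelow b)
  have hunion' := card_union_add_card_inter (irredBelow (toDual a)) (irredBelow (toDual b))
  rw [← irredBelow_inf] at hunion hunion'
  have hle : #(irredBelow (toDual a) ∪ irredBelow (toDual b)) ≤
      #(irredBelow (toDual (a ⊓ b))) :=
    card_le_card (union_subset (irredBelow_mono inf_le_left) (irredBelow_mono inf_le_right))
  have ha := card_irredBelow_add_card_irredBelow_toDual hL hU a
  have hb := card_irredBelow_add_card_irredBelow_toDual hL hU b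
  have hsup := card_irredBelow_add_card_irredBelow_toDual hL hU (a ⊔ b)
  have hinf := card_irredBelow_add_card_irredBelow_toDual hL hU (a ⊓ b)
  rw [_root_.toDual_sup] at hsup
  omega

theorem SupIrred.supPrime_of_locallyDistributive (hL : IsLowerLocallyDistributive P)
    (hU : IsLowerLocallyDistributive Pᵒᵈ) {j : P} (hj : SupIrred j) : SupPrime j := by
  classical
  refine ⟨hj.1, fun a b hab => ?_⟩
  have hmem := mem_irredBelow.2 ⟨hj, hab⟩
  rw [irredBelow_sup hL hU, mem_union, mem_irredBelow, mem_irredBelow] at hmem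
  tauto

end Counting

theorem inf_sup_left_of_forall_supPrime {P : Type*} [Lattice P] [OrderBot P]
    [WellFoundedLT P] (h : ∀ j : P, SupIrred j → SupPrime j) (x y z : P) :
    x ⊓ (y ⊔ z) = x ⊓ y ⊔ x ⊓ z := by
  refine le_antisymm ?_ le_inf_sup
  obtain ⟨s, hs, hirr⟩ := exists_supIrred_decomposition (x ⊓ (y ⊔ z))
  conv_lhs => rw [← hs]
  refine Finset.sup_le fun j hj => ?_
  have hjle : j ≤ x ⊓ (y ⊔ z) := hs ▸ le_sup (f := id) hj
  rcases (h j (hirr hj)).le_sup.1 (hjle.trans inf_le_right) with hy | hz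
  · exact le_sup_of_le_left (le_inf (hjle.trans inf_le_left) hy)
  · exact le_sup_of_le_right (le_inf (hjle.trans inf_le_left) hz)

/-- A finite lattice is distributive iff it is both upper locally distributive
(every element has a unique minimal representation as a meet of
meet-irreducibles) and lower locally distributive (dually, as a join of
join-irreducibles). -/
theorem stmt_11 {P : Type} [Lattice P] [Fintype P] [BoundedOrder P] :
    (∀ x y z : P, x ⊓ (y ⊔ z) = (x ⊓ y) ⊔ (x ⊓ z)) ↔
    ((∀ x : P, ∃ M : Finset P, (∀ m ∈ M, MeetIrredL m) ∧ x = M.inf id ∧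
        (∀ A : Finset P, (∀ m ∈ A, MeetIrredL m) → x = A.inf id → M ⊆ A)) ∧
     (∀ x : P, ∃ J : Finset P, (∀ m ∈ J, JoinIrredL m) ∧ x = J.sup id ∧
        (∀ A : Finset P, (∀ m ∈ A, JoinIrredL m) → x = A.sup id → J ⊆ A))) := by
  refine ⟨fun h => ?_, fun ⟨hU, hL⟩ => ?_⟩
  · let := DistribLattice.ofInfSupLe fun x y z => (h x y z).le
    exact ⟨isLowerLocallyDistributive_dual_iff.1 IsLowerLocallyDistributive.of_distribLattice,
      IsLowerLocallyDistributive.of_distribLattice⟩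
  · exact inf_sup_left_of_forall_supPrime fun j hj =>
      hj.supPrime_of_locallyDistributive hL (isLowerLocallyDistributive_dual_iff.2 hU)
end

section
/- Let D=(V,A) be a digraph, c_l, c_u : A → ℤ capacity functions, and x : A → ℤ a Δ-bond (i.e., c_l(a) ≤ x(a) ≤ c_u(a) for all a, with flow-difference δ(C,x) = Δ_C for every cycle C). Let U ⊆ V and let y = push(U,x) be defined by y(a) = x(a)+1 for arcs a from U to V\U, y(a) = x(a)−1 for arcs a from V\U to U, and y(a) = x(a) otherwise. If x(a) < c_u(a) for every forward arc of the cut S[U] and x(a) > c_l(a) for every backward arc, then y is also a Δ-bond. -/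
/-- A cycle (closed walk with a fixed traversal direction) in a directed
multigraph with arc set `A` and endpoint maps `src`, `tgt`. `dir i = true`
means the `i`-th arc is traversed forward. -/
structure ClosedWalk (V A : Type*) (src tgt : A → V) where
  len : ℕ
  arcs : ℕ → A
  dir : ℕ → Bool
  verts : ℕ → V
  closed : verts 0 = verts len
  compat : ∀ i, i < len →
    (dir i = true → src (arcs i) = verts i ∧ tgt (arcs i) = verts (i + 1)) ∧
    (dir i = false → tgt (arcs i) = verts i ∧ src (arcs i) = verts (i + 1))

/-- Circular flow-difference of `x` around the cycle `C`. -/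
def ClosedWalk.delta {V A : Type*} {src tgt : A → V}
    (C : ClosedWalk V A src tgt) (x : A → ℤ) : ℤ :=
  ∑ i ∈ Finset.range C.len, (if C.dir i then x (C.arcs i) else - x (C.arcs i))

/-- `x` is a Δ-bond: it respects the capacities and has prescribed circular
flow-difference `Δ C` around every cycle `C`. -/
def IsDeltaBond {V A : Type*} (src tgt : A → V) (cl cu : A → ℤ)
    (Δ : ClosedWalk V A src tgt → ℤ) (x : A → ℤ) : Prop :=
  (∀ a : A, cl a ≤ x a ∧ x a ≤ cu a) ∧
  (∀ C : ClosedWalk V A src tgt, C.delta x = Δ C)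

/-- Pushing the vertex set `U`: add 1 on arcs leaving `U`, subtract 1 on arcs
entering `U`. -/
def pushSet {V A : Type*} (src tgt : A → V) (U : V → Prop) [DecidablePred U]
    (x : A → ℤ) : A → ℤ :=
  fun a => x a + (if U (src a) ∧ ¬ U (tgt a) then 1 else 0)
               - (if U (tgt a) ∧ ¬ U (src a) then 1 else 0)

/-- If `x` is a Δ-bond and the cut at `U` is legal (strict slack on forward
arcs, strict slack above the lower capacity on backward arcs), then pushing
`U` again yields a Δ-bond. -/
theorem stmt_12 {V A : Type} (src tgt : A → V) (cl cu : A → ℤ)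
    (Δ : ClosedWalk V A src tgt → ℤ) (x : A → ℤ)
    (hx : IsDeltaBond src tgt cl cu Δ x)
    (U : V → Prop) [DecidablePred U]
    (hfwd : ∀ a : A, U (src a) → ¬ U (tgt a) → x a < cu a)
    (hbwd : ∀ a : A, U (tgt a) → ¬ U (src a) → cl a < x a) :
    IsDeltaBond src tgt cl cu Δ (pushSet src tgt U x) := by
  obtain ⟨hcap, hcyc⟩ := hx
  constructor
  · intro a
    have h1 := (hcap a).1
    have h2 := (hcap a).2
    unfold pushSet
    by_cases h : U (src a) ∧ ¬ U (tgt a)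
    · have := hfwd a h.1 h.2
      simp [h, fun hh : U (tgt a) ∧ ¬ U (src a) => hh.2 h.1]
      omega
    · by_cases h' : U (tgt a) ∧ ¬ U (src a)
      · have := hbwd a h'.1 h'.2
        simp [h, h']
        omega
      · simp [h, h']
        omega
  · intro C
    have key : C.delta (pushSet src tgt U x) = C.delta x := by
      unfold ClosedWalk.delta pushSet
      set χ : V → ℤ := fun v => if U v then 1 else 0 with hχ
      have hterm : ∀ i, i < C.len →
          (if C.dir i then x (C.arcs i)
              + (if U (src (C.arcs i)) ∧ ¬ U (tgt (C.arcs i)) then 1 else 0)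
              - (if U (tgt (C.arcs i)) ∧ ¬ U (src (C.arcs i)) then 1 else 0)
            else -(x (C.arcs i)
              + (if U (src (C.arcs i)) ∧ ¬ U (tgt (C.arcs i)) then 1 else 0)
              - (if U (tgt (C.arcs i)) ∧ ¬ U (src (C.arcs i)) then 1 else 0))) =
          (if C.dir i then x (C.arcs i) else - x (C.arcs i))
            + (χ (C.verts i) - χ (C.verts (i + 1))) := by
        intro i hi
        have hc := C.compat i hi
        cases hd : C.dir i with
        | true =>
          obtain ⟨hs, ht⟩ := hc.1 hd
          simp only [if_pos rfl, hs, ht, hχ]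
          by_cases h1 : U (C.verts i) <;> by_cases h2 : U (C.verts (i+1)) <;>
            simp [h1, h2] <;> ring
        | false =>
          obtain ⟨ht, hs⟩ := hc.2 hd
          simp only [hd, Bool.false_eq_true, if_false, hs, ht, hχ]
          by_cases h1 : U (C.verts i) <;> by_cases h2 : U (C.verts (i+1)) <;>
            simp [h1, h2] <;> ring
      rw [Finset.sum_congr rfl (fun i hi => hterm i (Finset.mem_range.mp hi)),
        Finset.sum_add_distrib]
      have : ∑ i ∈ Finset.range C.len, (χ (C.verts i) - χ (C.verts (i + 1))) = 0 := by
        rw [Finset.sum_range_sub' (fun i => χ (C.verts i)), C.closed, sub_self]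
      rw [this, add_zero]
    rw [key]; exact hcyc C
end

section
/- Let D=(V,A) be a connected digraph with integral capacities c_l ≤ c_u and cycle-value vector Δ such that the set B of Δ-bonds is nonempty and has no rigid edges (no arc a with x(a)=y(a) for all Δ-bonds x,y). Fix v_0 ∈ V. If x, y ∈ B and y is obtained from x by one legal push at a set U ⊆ V with v_0 ∉ U, then y can be obtained from x by a sequence of legal pushes at single vertices v ∈ U (each intermediate state a Δ-bond), one push per vertex of U. -/
/-!
Call `p` a predecessor of `q` (for the Δ-bond `x`) if some arc between them is at the bound
that a push at `q` alone would violate, so that `p` has to be pushed before `q`. Along a cycle of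
predecessors, every arc traversed forwards is at its lower bound and every arc traversed backwards
at its upper bound, so the cycle value of `x` is the least one any Δ-bond can have; as all Δ-bonds
have the same cycle value, they all agree on these arcs, which are then rigid. Without rigid arcs
the predecessor relation is therefore acyclic, and a vertex of `U` with no predecessor in `U` can
be pushed alone. Pushing it and recursing on the rest of `U` gives the sequence.
-/

variable {V A : Type*} {src tgt : A → V}

def ArcStep (src tgt : A → V) (a : A) (d : Bool) (p q : V) : Prop :=
  (d = true → src a = p ∧ tgt a = q) ∧ (d = false → tgt a = p ∧ src a = q)

def MustPushBefore (src tgt : A → V) (cl cu x : A → ℤ) (p q : V) : Prop :=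
  ∃ a, (x a = cu a ∧ tgt a = p ∧ src a = q) ∨ (x a = cl a ∧ src a = p ∧ tgt a = q)

lemma pushSet_apply (S : V → Prop) [DecidablePred S] (x : A → ℤ) (a : A) :
    pushSet src tgt S x a
      = x a + ((if S (src a) then 1 else 0) - (if S (tgt a) then 1 else 0)) := by
  rw [pushSet, add_sub_assoc]
  by_cases h1 : S (src a) <;> by_cases h2 : S (tgt a) <;> simp [h1, h2]

lemma pushSet_erase_pushSet_eq [DecidableEq V] (U : Finset V) {m : V} (hm : m ∈ U)
    (x : A → ℤ) :
    pushSet src tgt (· ∈ U.erase m) (pushSet src tgt (· = m) x) = pushSet src tgt (· ∈ U) x := by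
  funext a
  simp only [pushSet_apply, Finset.mem_erase]
  by_cases h1 : src a = m <;> by_cases h2 : tgt a = m <;>
    by_cases h3 : src a ∈ U <;> by_cases h4 : tgt a ∈ U <;> simp_all

/-- Each term of the cycle sum changes by a difference of consecutive potentials, which
telescopes to zero around the closed walk. -/
lemma ClosedWalk.delta_pushSet (C : ClosedWalk V A src tgt) (S : V → Prop) [DecidablePred S]
    (x : A → ℤ) : C.delta (pushSet src tgt S x) = C.delta x := by
  have hterm : ∀ i ∈ Finset.range C.len,
      (if C.dir i then pushSet src tgt S x (C.arcs i) else - pushSet src tgt S x (C.arcs i))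
        = (if C.dir i then x (C.arcs i) else - x (C.arcs i))
          + ((if S (C.verts i) then (1 : ℤ) else 0) - (if S (C.verts (i + 1)) then 1 else 0)) := by
    intro i hi
    have h := C.compat i (Finset.mem_range.mp hi)
    cases hd : C.dir i
    · obtain ⟨h1, h2⟩ := h.2 hd
      simp only [Bool.false_eq_true, if_false, pushSet_apply, h1, h2]
      ring
    · obtain ⟨h1, h2⟩ := h.1 hd
      simp only [if_true, pushSet_apply, h1, h2]
  unfold ClosedWalk.delta
  rw [Finset.sum_congr rfl hterm, Finset.sum_add_distrib, Finset.sum_range_sub', C.closed]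
  ring

lemma ClosedWalk.eq_of_delta_eq_of_forall_le (C : ClosedWalk V A src tgt) {x z : A → ℤ}
    (hle : ∀ i < C.len, (if C.dir i then x (C.arcs i) else - x (C.arcs i))
      ≤ (if C.dir i then z (C.arcs i) else - z (C.arcs i)))
    (h : C.delta x = C.delta z) {i : ℕ} (hi : i < C.len) : x (C.arcs i) = z (C.arcs i) := by
  have := (Finset.sum_eq_sum_iff_of_le fun j hj => hle j (Finset.mem_range.mp hj)).mp h i
    (Finset.mem_range.mpr hi)
  split_ifs at this <;> omega

lemma exists_walk_of_transGen {R : V → V → Prop} {ok : A → Bool → Prop}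
    (hR : ∀ p q, R p q → ∃ a d, ok a d ∧ ArcStep src tgt a d p q) {u w : V}
    (h : Relation.TransGen R u w) :
    ∃ (n : ℕ) (arcs : ℕ → A) (dir : ℕ → Bool) (verts : ℕ → V),
      0 < n ∧ verts 0 = u ∧ verts n = w ∧
      ∀ i < n, ok (arcs i) (dir i) ∧ ArcStep src tgt (arcs i) (dir i) (verts i) (verts (i + 1)) := by
  induction h using Relation.TransGen.head_induction_on with
  | single hpq =>
    obtain ⟨a, d, hok, hstep⟩ := hR _ _ hpq
    refine ⟨1, fun _ => a, fun _ => d, fun | 0 => _ | _ + 1 => w, one_pos, rfl, rfl, ?_⟩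
    intro i hi
    obtain rfl : i = 0 := by omega
    exact ⟨hok, hstep⟩
  | head hpq _ ih =>
    obtain ⟨a, d, hok, hstep⟩ := hR _ _ hpq
    obtain ⟨n, arcs, dir, verts, -, h0, hn, hwalk⟩ := ih
    refine ⟨n + 1, fun | 0 => a | j + 1 => arcs j, fun | 0 => d | j + 1 => dir j,
      fun | 0 => _ | j + 1 => verts j, n.succ_pos, rfl, hn, ?_⟩
    rintro (_ | j) hj
    · exact ⟨hok, by simpa only [h0] using hstep⟩
    · exact hwalk j (by omega)

lemma exists_closedWalk_of_transGen {R : V → V → Prop} {ok : A → Bool → Prop}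
    (hR : ∀ p q, R p q → ∃ a d, ok a d ∧ ArcStep src tgt a d p q) {v : V}
    (h : Relation.TransGen R v v) :
    ∃ C : ClosedWalk V A src tgt, 0 < C.len ∧ ∀ i < C.len, ok (C.arcs i) (C.dir i) := by
  obtain ⟨n, arcs, dir, verts, hn, h0, hv, hwalk⟩ := exists_walk_of_transGen hR h
  exact ⟨⟨n, arcs, dir, verts, h0.trans hv.symm, fun i hi => (hwalk i hi).2⟩, hn,
    fun i hi => (hwalk i hi).1⟩

section Bonds

variable {cl cu : A → ℤ} {Δ : ClosedWalk V A src tgt → ℤ}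

lemma irrefl_transGen_mustPushBefore
    (hnorigid : ∀ a : A, ∃ y z : A → ℤ, IsDeltaBond src tgt cl cu Δ y ∧
      IsDeltaBond src tgt cl cu Δ z ∧ y a ≠ z a)
    {x : A → ℤ} (hx : IsDeltaBond src tgt cl cu Δ x) :
    Std.Irrefl (Relation.TransGen (MustPushBefore src tgt cl cu x)) := by
  refine ⟨fun v hv => ?_⟩
  have hstep : ∀ p q, MustPushBefore src tgt cl cu x p q → ∃ a d,
      (∀ z, IsDeltaBond src tgt cl cu Δ z →
        (if d then x a else - x a) ≤ (if d then z a else - z a)) ∧ ArcStep src tgt a d p q := by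
    rintro p q ⟨a, ⟨hcu, hp, hq⟩ | ⟨hcl, hp, hq⟩⟩
    · refine ⟨a, false, fun z hz => ?_, by simp [ArcStep, hp, hq]⟩
      have := (hz.1 a).2
      simp only [Bool.false_eq_true, if_false]
      linarith
    · refine ⟨a, true, fun z hz => ?_, by simp [ArcStep, hp, hq]⟩
      have := (hz.1 a).1
      simp only [if_true]
      omega
  obtain ⟨C, hpos, htight⟩ := exists_closedWalk_of_transGen hstep hv
  have hfixed : ∀ z, IsDeltaBond src tgt cl cu Δ z → z (C.arcs 0) = x (C.arcs 0) := fun z hz =>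
    (C.eq_of_delta_eq_of_forall_le (fun i hi => htight i hi z hz)
      ((hx.2 C).trans (hz.2 C).symm) hpos).symm
  obtain ⟨y, z, hy, hz, hne⟩ := hnorigid (C.arcs 0)
  exact hne ((hfixed y hy).trans (hfixed z hz).symm)

lemma isDeltaBond_pushSet_single [DecidableEq V] {U : Finset V} {x : A → ℤ}
    (hx : IsDeltaBond src tgt cl cu Δ x)
    (hy : IsDeltaBond src tgt cl cu Δ (pushSet src tgt (· ∈ U) x)) {m : V} (hm : m ∈ U)
    (hfirst : ∀ p ∈ U, ¬ MustPushBefore src tgt cl cu x p m) :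
    IsDeltaBond src tgt cl cu Δ (pushSet src tgt (· = m) x) := by
  refine ⟨fun a => ?_, fun C => (C.delta_pushSet _ x).trans (hx.2 C)⟩
  have hb := hx.1 a
  have hyb := hy.1 a
  rw [pushSet_apply] at hyb ⊢
  by_cases h1 : src a = m <;> by_cases h2 : tgt a = m
  · simp only [h1, h2]
    omega
  · simp only [h1, if_neg h2, if_true]
    by_cases h4 : tgt a ∈ U
    · have : x a ≠ cu a := fun hcu => hfirst _ h4 ⟨a, Or.inl ⟨hcu, rfl, h1⟩⟩
      omega
    · simp only [h1, hm, h4, if_true, if_false] at hyb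
      omega
  · simp only [h2, if_neg h1, if_true]
    by_cases h3 : src a ∈ U
    · have : x a ≠ cl a := fun hcl => hfirst _ h3 ⟨a, Or.inr ⟨hcl, rfl, h2⟩⟩
      omega
    · simp only [h2, hm, h3, if_true, if_false] at hyb
      omega
  · simp only [if_neg h1, if_neg h2]
    omega

lemma exists_isDeltaBond_pushSet_single [Finite V] [DecidableEq V]
    (hnorigid : ∀ a : A, ∃ y z : A → ℤ, IsDeltaBond src tgt cl cu Δ y ∧
      IsDeltaBond src tgt cl cu Δ z ∧ y a ≠ z a)
    {U : Finset V} (hU : U.Nonempty) {x : A → ℤ} (hx : IsDeltaBond src tgt cl cu Δ x)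
    (hy : IsDeltaBond src tgt cl cu Δ (pushSet src tgt (· ∈ U) x)) :
    ∃ m ∈ U, IsDeltaBond src tgt cl cu Δ (pushSet src tgt (· = m) x) := by
  have := irrefl_transGen_mustPushBefore hnorigid hx
  obtain ⟨m, hm, hmin⟩ := (Finite.wellFounded_of_trans_of_irrefl
    (Relation.TransGen (MustPushBefore src tgt cl cu x))).has_min U hU
  exact ⟨m, hm, isDeltaBond_pushSet_single hx hy hm fun p hp h =>
    hmin p hp (Relation.TransGen.single h)⟩

end Bonds

theorem stmt_13_general {V A : Type} [Fintype V] [DecidableEq V]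
    (src tgt : A → V) (cl cu : A → ℤ) (Δ : ClosedWalk V A src tgt → ℤ)
    (hnorigid : ∀ a : A, ∃ y z : A → ℤ, IsDeltaBond src tgt cl cu Δ y ∧
      IsDeltaBond src tgt cl cu Δ z ∧ y a ≠ z a)
    (U : Finset V)
    (x : A → ℤ) (hx : IsDeltaBond src tgt cl cu Δ x)
    (hy : IsDeltaBond src tgt cl cu Δ (pushSet src tgt (· ∈ U) x)) :
    ∃ l : List V, l.Nodup ∧ l.toFinset = U ∧
      (∀ i, i ≤ l.length → IsDeltaBond src tgt cl cu Δ
        (List.foldl (fun z v => pushSet src tgt (· = v) z) x (l.take i))) ∧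
      List.foldl (fun z v => pushSet src tgt (· = v) z) x l
        = pushSet src tgt (· ∈ U) x := by
  induction U using Finset.strongInductionOn generalizing x with
  | _ U ih =>
    rcases U.eq_empty_or_nonempty with rfl | hU
    · refine ⟨[], List.nodup_nil, rfl, fun i _ => by simpa using hx, ?_⟩
      funext a
      simp [pushSet]
    obtain ⟨m, hm, hxm⟩ := exists_isDeltaBond_pushSet_single hnorigid hU hx hy
    obtain ⟨l, hnd, hl, hbonds, hfold⟩ := ih (U.erase m) (Finset.erase_ssubset hm) _ hxm
      (by rwa [pushSet_erase_pushSet_eq U hm])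
    refine ⟨m :: l, List.nodup_cons.mpr ⟨fun h => U.notMem_erase m ?_, hnd⟩, ?_, ?_, ?_⟩
    · exact hl ▸ List.mem_toFinset.mpr h
    · rw [List.toFinset_cons, hl, Finset.insert_erase hm]
    · rintro (_ | i) hi
      · simpa using hx
      · exact hbonds i (by simpa using hi)
    · rw [List.foldl_cons, hfold, pushSet_erase_pushSet_eq U hm]

/-- In a connected digraph with reduced data (no rigid arcs), a legal push at
a set `U` not containing the forbidden vertex `v₀` decomposes into a sequence
of legal single-vertex pushes, one for each vertex of `U`, with every
intermediate state a Δ-bond. -/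
theorem stmt_13 {V A : Type} [Fintype V] [Fintype A] [DecidableEq V]
    (src tgt : A → V) (cl cu : A → ℤ) (Δ : ClosedWalk V A src tgt → ℤ)
    (hconn : ∀ u w : V, Relation.ReflTransGen
      (fun p q => ∃ a : A, (src a = p ∧ tgt a = q) ∨ (src a = q ∧ tgt a = p)) u w)
    (hnorigid : ∀ a : A, ∃ y z : A → ℤ, IsDeltaBond src tgt cl cu Δ y ∧
      IsDeltaBond src tgt cl cu Δ z ∧ y a ≠ z a)
    (v₀ : V) (U : Finset V) (hv₀ : v₀ ∉ U)
    (x : A → ℤ) (hx : IsDeltaBond src tgt cl cu Δ x)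
    (hy : IsDeltaBond src tgt cl cu Δ (pushSet src tgt (· ∈ U) x)) :
    ∃ l : List V, l.Nodup ∧ l.toFinset = U ∧
      (∀ i, i ≤ l.length → IsDeltaBond src tgt cl cu Δ
        (List.foldl (fun z v => pushSet src tgt (· = v) z) x (l.take i))) ∧
      List.foldl (fun z v => pushSet src tgt (· = v) z) x l
        = pushSet src tgt (· ∈ U) x :=
  stmt_13_general src tgt cl cu Δ hnorigid U x hx hy
end

section
/- Let D=(V,A) be a connected digraph with capacities c_l ≤ c_u and fixed forbidden vertex v_0, with reduced data (no rigid edges). Define x ≤ y on Δ-bonds if y is reachable from x by a sequence of legal pushes at vertex cuts S[v] with v ≠ v_0. Then this relation is antisymmetric (the reachability digraph on Δ-bonds via such pushes is acyclic), hence a partial order. -/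
def dvec {V A : Type} [DecidableEq V] (src tgt : A → V) (v : V) (a : A) : ℤ :=
  (if src a = v then 1 else 0) - (if tgt a = v then 1 else 0)

lemma push_eq_dvec {V A : Type} [DecidableEq V] (src tgt : A → V) (v : V)
    (x : A → ℤ) (a : A) :
    pushSet src tgt (· = v) x a = x a + dvec src tgt v a := by
  unfold pushSet dvec
  by_cases h1 : src a = v <;> by_cases h2 : tgt a = v <;> simp [h1, h2] <;> ring

lemma sum_dvec {V A : Type} [Fintype V] [DecidableEq V] (src tgt : A → V)
    (f : V → ℤ) (a : A) :
    ∑ v, f v * dvec src tgt v a = f (src a) - f (tgt a) := by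
  unfold dvec
  simp [mul_sub, Finset.sum_sub_distrib, mul_ite, Finset.sum_ite_eq']

lemma chain_decomp {V A : Type} [Fintype V] [DecidableEq V]
    (src tgt : A → V) (cl cu : A → ℤ) (Δ : ClosedWalk V A src tgt → ℤ) (v₀ : V)
    {x y : A → ℤ}
    (h : Relation.ReflTransGen
        (fun s t => IsDeltaBond src tgt cl cu Δ s ∧ IsDeltaBond src tgt cl cu Δ t ∧
          ∃ v : V, v ≠ v₀ ∧ t = pushSet src tgt (· = v) s) x y) :
    ∃ m : V → ℤ, m v₀ = 0 ∧ (∀ v, 0 ≤ m v) ∧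
      ∀ a, y a = x a + ∑ v, m v * dvec src tgt v a := by
  induction h with
  | refl => exact ⟨fun _ => 0, rfl, fun _ => le_refl 0, fun a => by simp⟩
  | tail _ hstep ih =>
    obtain ⟨m, hm0, hmnn, hm⟩ := ih
    obtain ⟨_, _, v, hv, ht⟩ := hstep
    refine ⟨fun w => m w + if w = v then 1 else 0, by simp [hm0, hv.symm],
      fun w => by have := hmnn w; positivity, fun a => ?_⟩
    rw [ht, push_eq_dvec, hm a]
    have : ∑ w, (m w + if w = v then 1 else 0) * dvec src tgt w a
        = (∑ w, m w * dvec src tgt w a) + ∑ w, (if w = v then 1 else 0) * dvec src tgt w a := by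
      rw [← Finset.sum_add_distrib]; exact Finset.sum_congr rfl (fun w _ => by ring)
    rw [this]
    simp [ite_mul, Finset.sum_ite_eq]
    ring

/-- The push-reachability relation on Δ-bonds (legal single-vertex pushes
avoiding the forbidden vertex `v₀`) is antisymmetric, hence a partial order. -/
theorem stmt_14 {V A : Type} [Fintype V] [Fintype A] [DecidableEq V]
    (src tgt : A → V) (cl cu : A → ℤ) (Δ : ClosedWalk V A src tgt → ℤ)
    (hconn : ∀ u w : V, Relation.ReflTransGen
      (fun p q => ∃ a : A, (src a = p ∧ tgt a = q) ∨ (src a = q ∧ tgt a = p)) u w)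
    (hnorigid : ∀ a : A, ∃ y z : A → ℤ, IsDeltaBond src tgt cl cu Δ y ∧
      IsDeltaBond src tgt cl cu Δ z ∧ y a ≠ z a)
    (v₀ : V) :
    ∀ x y : A → ℤ,
      Relation.ReflTransGen
        (fun s t => IsDeltaBond src tgt cl cu Δ s ∧ IsDeltaBond src tgt cl cu Δ t ∧
          ∃ v : V, v ≠ v₀ ∧ t = pushSet src tgt (· = v) s) x y →
      Relation.ReflTransGen
        (fun s t => IsDeltaBond src tgt cl cu Δ s ∧ IsDeltaBond src tgt cl cu Δ t ∧
          ∃ v : V, v ≠ v₀ ∧ t = pushSet src tgt (· = v) s) y x →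
      x = y := by
  intro x y hxy hyx
  obtain ⟨m, hm0, hmnn, hm⟩ := chain_decomp src tgt cl cu Δ v₀ hxy
  obtain ⟨m', hm'0, hm'nn, hm'⟩ := chain_decomp src tgt cl cu Δ v₀ hyx
  set f : V → ℤ := fun v => m v + m' v with hf
  have hsum : ∀ a, f (src a) - f (tgt a) = 0 := by
    intro a
    have h1 := hm a
    have h2 := hm' a
    have : ∑ v, f v * dvec src tgt v a = 0 := by
      have : (∑ v, m v * dvec src tgt v a) + (∑ v, m' v * dvec src tgt v a) = 0 := by
        omega
      rw [← this, ← Finset.sum_add_distrib]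
      exact Finset.sum_congr rfl (fun v _ => by simp [hf]; ring)
    rw [← sum_dvec src tgt f a, this]
  -- f is constant along connectivity, f v₀ = 0, so f ≡ 0
  have hfv0 : f v₀ = 0 := by simp [hf, hm0, hm'0]
  have hfzero : ∀ w, f w = 0 := by
    intro w
    have := hconn v₀ w
    induction this with
    | refl => exact hfv0
    | tail _ hstep ih =>
      obtain ⟨a, h⟩ := hstep
      rcases h with ⟨h1, h2⟩ | ⟨h1, h2⟩
      · have := hsum a; rw [h1, h2] at this; omega
      · have := hsum a; rw [h1, h2] at this; omega
  have hmzero : ∀ v, m v = 0 := fun v => by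
    have := hfzero v; have := hmnn v; have := hm'nn v; simp [hf] at *; omega
  funext a
  have := hm a
  rw [Finset.sum_eq_zero (fun v _ => by rw [hmzero v]; ring)] at this
  omega
end

section
/- With reduced data (D connected, no rigid edges, Δ-bonds nonempty) and forbidden vertex v_0, the coloring of the cover edges of the push-order on Δ-bonds by the pushed vertex v ∈ V\{v_0} is simultaneously a U-coloring and an L-coloring, and the push-order is connected; consequently the set of Δ-bonds B_Δ(D,c_l,c_u), ordered by push-reachability avoiding v_0, is a distributive lattice. -/
/-- The subtype of Δ-bonds. -/
def Bond {V A : Type*} (src tgt : A → V) (cl cu : A → ℤ)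
    (Δ : ClosedWalk V A src tgt → ℤ) : Type _ :=
  {x : A → ℤ // IsDeltaBond src tgt cl cu Δ x}

/-- One legal single-vertex push (avoiding `v₀`) between Δ-bonds. -/
def PushStep {V A : Type*} [DecidableEq V] (src tgt : A → V) (cl cu : A → ℤ)
    (Δ : ClosedWalk V A src tgt → ℤ) (v₀ : V)
    (s t : Bond src tgt cl cu Δ) : Prop :=
  ∃ v : V, v ≠ v₀ ∧ t.1 = pushSet src tgt (· = v) s.1

/-!
Fix a Δ-bond `x₀`. On a connected digraph, an arc function has zero sum around every closed walk
iff it is the coboundary `δπ : a ↦ π (src a) - π (tgt a)` of a potential `π`, unique once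
normalised by `π v₀ = 0`. So Δ-bonds correspond to the potentials with `π v₀ = 0` and
`cl - x₀ ≤ δπ ≤ cu - x₀`; these difference constraints survive pointwise `max` and `min`, so the
potentials form a sublattice of `V → ℤ`, and pushing `v ≠ v₀` adds the indicator `eᵥ` of `v`.
Both coloring axioms come from the diamonds `(p + eᵥ) ⊔ (p + e_w) = p + eᵥ + e_w` and
`(p + eᵥ) ⊓ (p + e_w) = p`.

For `p < q` some single vertex can be pushed towards `q`: summing, over all arcs, two bonds that
differ on that arc gives a potential `ρ` with `N (cl - x₀) < δρ < N (cu - x₀)`, and a vertex of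
`{p < q}` maximising `ρ - N p` is blocked by no tight arc. Hence push-reachability is the
pointwise order, and any two bonds are connected through their join.
-/

open Function Relation

lemma UColoring.onFun {α β κ : Type*} {R : β → β → Prop} {c : β → β → κ} (h : UColoring R c)
    {e : α → β} (he : Bijective e) : UColoring (R on e) (c on e) := by
  refine ⟨fun s t t' ht ht' hne => h.1 _ _ _ ht ht' (he.1.ne hne), fun s t t' ht ht' hne => ?_⟩
  obtain ⟨z, hz⟩ := h.2 _ _ _ ht ht' (he.1.ne hne)
  obtain ⟨z, rfl⟩ := he.2 z
  exact ⟨z, hz⟩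

lemma Equiv.reflTransGen_onFun_iff {α β : Type*} (e : α ≃ β) {R : β → β → Prop} {a b : α} :
    ReflTransGen (R on e) a b ↔ ReflTransGen R (e a) (e b) := by
  refine ⟨fun h => ReflTransGen.lift e (fun _ _ => id) _ _ h, fun h => ?_⟩
  simpa [onFun] using
    ReflTransGen.lift e.symm (p := R on e) (fun x y hxy => by simpa [onFun] using hxy) _ _ h

section Coboundary

variable {V A : Type*} (src tgt : A → V)

def coboundary : (V → ℤ) →+ (A → ℤ) :=
  AddMonoidHom.mk' (fun π a => π (src a) - π (tgt a)) fun π σ => by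
    ext; simp only [Pi.add_apply]; ring

variable {src tgt}

@[simp] lemma coboundary_apply (π : V → ℤ) (a : A) :
    coboundary src tgt π a = π (src a) - π (tgt a) := rfl

lemma pushSet_eq_add_coboundary [DecidableEq V] (v : V) (x : A → ℤ) :
    pushSet src tgt (· = v) x = x + coboundary src tgt (Pi.single v 1) := by
  ext a
  by_cases hs : src a = v <;> by_cases ht : tgt a = v <;> simp [pushSet, hs, ht, sub_eq_add_neg]

namespace ClosedWalk

variable (C : ClosedWalk V A src tgt)

lemma delta_add (x y : A → ℤ) : C.delta (x + y) = C.delta x + C.delta y := by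
  simp only [delta, ← Finset.sum_add_distrib, Pi.add_apply]
  refine Finset.sum_congr rfl fun i _ => ?_
  split_ifs <;> ring

lemma delta_sub (x y : A → ℤ) : C.delta (x - y) = C.delta x - C.delta y := by
  rw [eq_sub_iff_add_eq, ← delta_add, sub_add_cancel]

lemma delta_coboundary (π : V → ℤ) : C.delta (coboundary src tgt π) = 0 := by
  have step : ∀ i ∈ Finset.range C.len,
      (if C.dir i then coboundary src tgt π (C.arcs i) else -coboundary src tgt π (C.arcs i)) =
        π (C.verts i) - π (C.verts (i + 1)) := by
    intro i hi
    have hc := C.compat i (Finset.mem_range.mp hi)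
    cases hd : C.dir i
    · simp [(hc.2 hd).1, (hc.2 hd).2]
    · simp [(hc.1 hd).1, (hc.1 hd).2]
  rw [delta, Finset.sum_congr rfl step, Finset.sum_range_sub', C.closed, sub_self]

end ClosedWalk

end Coboundary

section Walks

variable {V A : Type*} (src tgt : A → V)

/-- A step `(a, true)` traverses the arc `a` forwards, `(a, false)` backwards. -/
def stepStart (s : A × Bool) : V := if s.2 then src s.1 else tgt s.1

def stepEnd (s : A × Bool) : V := if s.2 then tgt s.1 else src s.1

def IsWalk : V → List (A × Bool) → V → Prop
  | u, [], w => u = w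
  | u, s :: l, w => stepStart src tgt s = u ∧ IsWalk (stepEnd src tgt s) l w

def walkVerts : V → List (A × Bool) → ℕ → V
  | u, _, 0 => u
  | u, [], _ + 1 => u
  | _, s :: l, i + 1 => walkVerts (stepEnd src tgt s) l i

def signedValue (x : A → ℤ) (s : A × Bool) : ℤ := if s.2 then x s.1 else -x s.1

def walkSum (x : A → ℤ) (l : List (A × Bool)) : ℤ := (l.map (signedValue x)).sum

def ArcConnected : Prop :=
  ∀ u w : V, ReflTransGen
    (fun p q => ∃ a : A, (src a = p ∧ tgt a = q) ∨ (src a = q ∧ tgt a = p)) u w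

variable {src tgt}

lemma IsWalk.append {u w z : V} {l l' : List (A × Bool)} (h : IsWalk src tgt u l w)
    (h' : IsWalk src tgt w l' z) : IsWalk src tgt u (l ++ l') z := by
  induction l generalizing u with
  | nil => cases h; exact h'
  | cons s l ih => exact ⟨h.1, ih h.2⟩

lemma exists_isWalk (hconn : ArcConnected src tgt) (u w : V) :
    ∃ l, IsWalk src tgt u l w := by
  induction hconn u w using ReflTransGen.head_induction_on with
  | refl => exact ⟨[], rfl⟩
  | head hstep _ ih =>
    obtain ⟨l, hl⟩ := ih
    obtain ⟨a, ⟨rfl, rfl⟩ | ⟨rfl, rfl⟩⟩ := hstep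
    exacts [⟨(a, true) :: l, rfl, hl⟩, ⟨(a, false) :: l, rfl, hl⟩]

lemma IsWalk.walkVerts_length {u w : V} {l : List (A × Bool)} (h : IsWalk src tgt u l w) :
    walkVerts src tgt u l l.length = w := by
  induction l generalizing u with
  | nil => exact h
  | cons s l ih => exact ih h.2

lemma IsWalk.step_getD {u w : V} {l : List (A × Bool)} (h : IsWalk src tgt u l w)
    (d : A × Bool) {i : ℕ} (hi : i < l.length) :
    stepStart src tgt (l.getD i d) = walkVerts src tgt u l i ∧
      stepEnd src tgt (l.getD i d) = walkVerts src tgt u l (i + 1) := by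
  induction l generalizing u i with
  | nil => simp at hi
  | cons s l ih =>
    cases i with
    | zero => exact ⟨h.1, by cases l <;> rfl⟩
    | succ i => exact ih h.2 (by simpa using hi)

def IsWalk.toClosedWalk {u : V} {l : List (A × Bool)} (h : IsWalk src tgt u l u)
    (d : A × Bool) : ClosedWalk V A src tgt where
  len := l.length
  arcs i := (l.getD i d).1
  dir i := (l.getD i d).2
  verts := walkVerts src tgt u l
  closed := by rw [h.walkVerts_length]; cases l <;> rfl
  compat i hi := by
    have hs := h.step_getD d hi
    simp only [stepStart, stepEnd] at hs
    constructor <;> intro (hd : (l.getD i d).2 = _) <;> rw [hd] at hs <;> exact hs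

lemma walkSum_eq_sum_getD (x : A → ℤ) (l : List (A × Bool)) (d : A × Bool) :
    walkSum x l = ∑ i ∈ Finset.range l.length, signedValue x (l.getD i d) := by
  induction l with
  | nil => rfl
  | cons s l ih =>
    rw [walkSum, List.map_cons, List.sum_cons, ← walkSum, ih, List.length_cons,
      Finset.sum_range_succ', add_comm]
    rfl

lemma IsWalk.delta_toClosedWalk {u : V} {l : List (A × Bool)} (h : IsWalk src tgt u l u)
    (d : A × Bool) (x : A → ℤ) : (h.toClosedWalk d).delta x = walkSum x l :=
  (walkSum_eq_sum_getD x l d).symm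

lemma IsWalk.walkSum_eq_zero {x : A → ℤ} (hx : ∀ C : ClosedWalk V A src tgt, C.delta x = 0)
    {u : V} {l : List (A × Bool)} (h : IsWalk src tgt u l u) : walkSum x l = 0 := by
  cases l with
  | nil => rfl
  | cons s l => rw [← h.delta_toClosedWalk s, hx]

end Walks

section Connected

variable {V A : Type*} {src tgt : A → V}

lemma walkSum_eq_of_isWalk (hconn : ArcConnected src tgt) {x : A → ℤ}
    (hx : ∀ C : ClosedWalk V A src tgt, C.delta x = 0) {u w : V} {l₁ l₂ : List (A × Bool)}
    (h₁ : IsWalk src tgt u l₁ w) (h₂ : IsWalk src tgt u l₂ w) : walkSum x l₁ = walkSum x l₂ := by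
  obtain ⟨l, hl⟩ := exists_isWalk hconn w u
  have e₁ := (h₁.append hl).walkSum_eq_zero hx
  have e₂ := (h₂.append hl).walkSum_eq_zero hx
  simp only [walkSum, List.map_append, List.sum_append] at e₁ e₂ ⊢
  linarith

lemma exists_coboundary_eq (hconn : ArcConnected src tgt) {x : A → ℤ}
    (hx : ∀ C : ClosedWalk V A src tgt, C.delta x = 0) (v₀ : V) :
    ∃ π : V → ℤ, π v₀ = 0 ∧ coboundary src tgt π = x := by
  choose l hl using fun v => exists_isWalk hconn v v₀
  refine ⟨fun v => walkSum x (l v),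
    walkSum_eq_of_isWalk hconn hx (hl v₀) (l₂ := []) rfl, ?_⟩
  ext a
  have h := walkSum_eq_of_isWalk hconn hx (hl (src a))
    (show IsWalk src tgt (src a) ((a, true) :: l (tgt a)) v₀ from ⟨rfl, hl _⟩)
  simp only [walkSum, List.map_cons, List.sum_cons, signedValue, if_true] at h
  simp only [coboundary_apply, walkSum, h, add_sub_cancel_right]

lemma eq_of_coboundary_eq (hconn : ArcConnected src tgt) {π σ : V → ℤ}
    (h : coboundary src tgt π = coboundary src tgt σ) {v₀ : V} (h₀ : π v₀ = σ v₀) : π = σ := by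
  funext v
  induction hconn v₀ v with
  | refl => exact h₀
  | tail _ hstep ih =>
    obtain ⟨a, ⟨rfl, rfl⟩ | ⟨rfl, rfl⟩⟩ := hstep <;>
    · have ha := congrFun h a
      simp only [coboundary_apply] at ha
      linarith

end Connected

section FeasiblePotentials

variable {V A : Type*} (src tgt : A → V)

def feasiblePotentials (lo hi : A → ℤ) (v₀ : V) : Sublattice (V → ℤ) where
  carrier := {π | π v₀ = 0 ∧
    ∀ a, lo a ≤ coboundary src tgt π a ∧ coboundary src tgt π a ≤ hi a}
  supClosed' π hπ σ hσ := ⟨by simp [hπ.1, hσ.1], fun a => by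
    have := hπ.2 a; have := hσ.2 a
    simp only [coboundary_apply, Pi.sup_apply] at *
    omega⟩
  infClosed' π hπ σ hσ := ⟨by simp [hπ.1, hσ.1], fun a => by
    have := hπ.2 a; have := hσ.2 a
    simp only [coboundary_apply, Pi.inf_apply] at *
    omega⟩

variable {src tgt} {cl cu : A → ℤ} {Δ : ClosedWalk V A src tgt → ℤ} {x₀ : A → ℤ}

lemma isDeltaBond_add_coboundary_iff (hx₀ : IsDeltaBond src tgt cl cu Δ x₀) (π : V → ℤ) :
    IsDeltaBond src tgt cl cu Δ (x₀ + coboundary src tgt π) ↔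
      ∀ a, (cl - x₀) a ≤ coboundary src tgt π a ∧ coboundary src tgt π a ≤ (cu - x₀) a := by
  simp only [IsDeltaBond, ClosedWalk.delta_add, ClosedWalk.delta_coboundary, add_zero, hx₀.2,
    implies_true, and_true, Pi.add_apply, Pi.sub_apply]
  exact forall_congr' fun a => by omega

def toBond (hx₀ : IsDeltaBond src tgt cl cu Δ x₀) (v₀ : V)
    (π : feasiblePotentials src tgt (cl - x₀) (cu - x₀) v₀) : Bond src tgt cl cu Δ :=
  ⟨x₀ + coboundary src tgt π, (isDeltaBond_add_coboundary_iff hx₀ π).2 π.2.2⟩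

lemma toBond_bijective (hconn : ArcConnected src tgt) (hx₀ : IsDeltaBond src tgt cl cu Δ x₀)
    (v₀ : V) : Bijective (toBond hx₀ v₀) := by
  refine ⟨fun π σ h => Subtype.ext ?_, fun s => ?_⟩
  · exact eq_of_coboundary_eq hconn (add_left_cancel (congrArg Subtype.val h))
      (π.2.1.trans σ.2.1.symm)
  · obtain ⟨π, hπ₀, hπ⟩ := exists_coboundary_eq hconn (x := s.1 - x₀)
      (fun C => by rw [C.delta_sub, s.2.2, hx₀.2, sub_self]) v₀
    have hs : x₀ + coboundary src tgt π = s.1 := by rw [hπ, add_sub_cancel]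
    exact ⟨⟨π, hπ₀, (isDeltaBond_add_coboundary_iff hx₀ π).1 (hs ▸ s.2)⟩, Subtype.ext hs⟩

noncomputable def potentialEquiv (hconn : ArcConnected src tgt)
    (hx₀ : IsDeltaBond src tgt cl cu Δ x₀) (v₀ : V) :
    Bond src tgt cl cu Δ ≃ feasiblePotentials src tgt (cl - x₀) (cu - x₀) v₀ :=
  (Equiv.ofBijective _ (toBond_bijective hconn hx₀ v₀)).symm

lemma coe_eq_add_coboundary_potentialEquiv (hconn : ArcConnected src tgt)
    (hx₀ : IsDeltaBond src tgt cl cu Δ x₀) (v₀ : V) (s : Bond src tgt cl cu Δ) :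
    s.1 = x₀ + coboundary src tgt (potentialEquiv hconn hx₀ v₀ s : V → ℤ) :=
  (congrArg Subtype.val
    (Equiv.ofBijective_apply_symm_apply (toBond hx₀ v₀) (toBond_bijective hconn hx₀ v₀) s)).symm

lemma exists_mem_feasiblePotentials_coboundary_ne (hconn : ArcConnected src tgt)
    (hx₀ : IsDeltaBond src tgt cl cu Δ x₀) (v₀ : V)
    (hnorigid : ∀ a : A, ∃ y z : A → ℤ, IsDeltaBond src tgt cl cu Δ y ∧
      IsDeltaBond src tgt cl cu Δ z ∧ y a ≠ z a) (a : A) :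
    ∃ π ∈ feasiblePotentials src tgt (cl - x₀) (cu - x₀) v₀,
      ∃ σ ∈ feasiblePotentials src tgt (cl - x₀) (cu - x₀) v₀,
        coboundary src tgt π a ≠ coboundary src tgt σ a := by
  obtain ⟨y, z, hy, hz, hyz⟩ := hnorigid a
  refine ⟨_, (potentialEquiv hconn hx₀ v₀ ⟨y, hy⟩).2, _, (potentialEquiv hconn hx₀ v₀ ⟨z, hz⟩).2,
    fun h => hyz ?_⟩
  have hy' := congrFun (coe_eq_add_coboundary_potentialEquiv hconn hx₀ v₀ ⟨y, hy⟩) a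
  have hz' := congrFun (coe_eq_add_coboundary_potentialEquiv hconn hx₀ v₀ ⟨z, hz⟩) a
  simp only [Pi.add_apply] at hy' hz'
  rw [hy', hz', h]

end FeasiblePotentials

section UnitSteps

variable {V : Type*}

open Classical in
noncomputable def diffVertex (d : V) (p q : V → ℤ) : V :=
  if h : ∃ v, p v ≠ q v then h.choose else d

lemma diffVertex_eq {d v : V} {p q : V → ℤ} (h : ∀ u, p u ≠ q u ↔ u = v) :
    diffVertex d p q = v := by
  have hex : ∃ u, p u ≠ q u := ⟨v, (h v).2 rfl⟩
  rw [diffVertex, dif_pos hex]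
  exact (h _).1 hex.choose_spec

variable [DecidableEq V]

def UnitStep (p q : V → ℤ) : Prop := ∃ v, q = p + Pi.single v 1

lemma UnitStep.le {p q : V → ℤ} (h : UnitStep p q) : p ≤ q := by
  obtain ⟨v, rfl⟩ := h
  exact le_add_of_nonneg_right (Pi.single_nonneg.2 zero_le_one)

lemma add_single_sup_add_single (p : V → ℤ) {v w : V} (h : v ≠ w) :
    (p + Pi.single v 1) ⊔ (p + Pi.single w 1) = p + Pi.single v 1 + Pi.single w 1 := by
  ext u
  rcases eq_or_ne u v with rfl | hv <;> rcases eq_or_ne u w with rfl | hw <;>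
    simp_all

lemma add_single_inf_add_single (p : V → ℤ) {v w : V} (h : v ≠ w) :
    (p + Pi.single v 1) ⊓ (p + Pi.single w 1) = p := by
  ext u
  rcases eq_or_ne u v with rfl | hv <;> rcases eq_or_ne u w with rfl | hw <;>
    simp_all

@[simp] lemma diffVertex_add_single_right (d v : V) (p : V → ℤ) :
    diffVertex d p (p + Pi.single v 1) = v :=
  diffVertex_eq fun u => by rcases eq_or_ne u v with rfl | h <;> simp [*]

@[simp] lemma diffVertex_add_single_left (d v : V) (p : V → ℤ) :
    diffVertex d (p + Pi.single v 1) p = v :=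
  diffVertex_eq fun u => by rcases eq_or_ne u v with rfl | h <;> simp [*]

variable (L : Sublattice (V → ℤ)) (d : V)

lemma uColoring_unitStep :
    UColoring (UnitStep on ((↑) : L → V → ℤ)) (diffVertex d on (↑)) := by
  refine ⟨?_, ?_⟩
  · rintro s t t' ⟨v, hv⟩ ⟨v', hv'⟩ hne hc
    simp only [onFun, hv, hv', diffVertex_add_single_right] at hc
    exact hne (Subtype.ext (by rw [hv, hv', hc]))
  · rintro s t t' ⟨v, hv⟩ ⟨v', hv'⟩ hne
    have hvv' : v ≠ v' := by rintro rfl; exact hne (Subtype.ext (hv.trans hv'.symm))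
    have hsup : ((t ⊔ t' : L) : V → ℤ) = (s : V → ℤ) + Pi.single v 1 + Pi.single v' 1 := by
      rw [Sublattice.coe_sup, hv, hv', add_single_sup_add_single _ hvv']
    have hsup' : ((t ⊔ t' : L) : V → ℤ) = (s : V → ℤ) + Pi.single v' 1 + Pi.single v 1 := by
      rw [hsup, add_right_comm]
    refine ⟨t ⊔ t', ⟨v', by rw [hsup, hv]⟩, ⟨v, by rw [hsup', hv']⟩, ?_, ?_⟩
    · simp only [onFun, hv, hv', hsup', diffVertex_add_single_right]
    · simp only [onFun, hv, hv', hsup, diffVertex_add_single_right]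

lemma uColoring_flip_unitStep :
    UColoring (flip (UnitStep on ((↑) : L → V → ℤ))) (diffVertex d on (↑)) := by
  refine ⟨?_, ?_⟩
  · rintro s t t' ⟨v, hv⟩ ⟨v', hv'⟩ hne hc
    have hct : (diffVertex d on (↑)) s t = v := by
      simp only [onFun, hv, diffVertex_add_single_left]
    have hct' : (diffVertex d on (↑)) s t' = v' := by
      simp only [onFun, hv', diffVertex_add_single_left]
    obtain rfl : v = v' := hct.symm.trans (hc.trans hct')
    exact hne (Subtype.ext (add_right_cancel (hv.symm.trans hv')))
  · rintro s t t' ⟨v, hv⟩ ⟨v', hv'⟩ hne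
    have hvv' : v ≠ v' := by
      rintro rfl; exact hne (Subtype.ext (add_right_cancel (hv.symm.trans hv')))
    set p : V → ℤ := (t : V → ℤ) - Pi.single v' 1
    have ht : (t : V → ℤ) = p + Pi.single v' 1 := (sub_add_cancel _ _).symm
    have ht' : (t' : V → ℤ) = p + Pi.single v 1 := by
      rw [← add_right_cancel_iff (a := Pi.single v' 1), ← hv', hv, ht, add_right_comm]
    have hs : (s : V → ℤ) = p + Pi.single v' 1 + Pi.single v 1 := by rw [hv, ht]
    have hs' : (s : V → ℤ) = p + Pi.single v 1 + Pi.single v' 1 := by rw [hs, add_right_comm]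
    have hinf : ((t ⊓ t' : L) : V → ℤ) = p := by
      rw [Sublattice.coe_inf, ht, ht', add_single_inf_add_single _ hvv'.symm]
    refine ⟨t ⊓ t', ⟨v', by rw [hinf, ht]⟩, ⟨v, by rw [hinf, ht']⟩, ?_, ?_⟩
    · simp only [onFun, hs, ht, ht', hinf, diffVertex_add_single_left]
    · simp only [onFun, hs', ht, ht', hinf, diffVertex_add_single_left]

end UnitSteps

section Pushes

variable {V A : Type*} [DecidableEq V] {src tgt : A → V} {cl cu : A → ℤ}
  {Δ : ClosedWalk V A src tgt → ℤ} {x₀ : A → ℤ}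

lemma pushSet_eq_iff_potentialEquiv (hconn : ArcConnected src tgt)
    (hx₀ : IsDeltaBond src tgt cl cu Δ x₀) {v₀ v : V} (hv : v ≠ v₀) (s t : Bond src tgt cl cu Δ) :
    t.1 = pushSet src tgt (· = v) s.1 ↔
      (potentialEquiv hconn hx₀ v₀ t : V → ℤ) =
        (potentialEquiv hconn hx₀ v₀ s : V → ℤ) + Pi.single v 1 := by
  rw [pushSet_eq_add_coboundary, coe_eq_add_coboundary_potentialEquiv hconn hx₀ v₀ t,
    coe_eq_add_coboundary_potentialEquiv hconn hx₀ v₀ s, add_assoc, ← map_add, add_right_inj]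
  refine ⟨fun h => eq_of_coboundary_eq hconn h (v₀ := v₀) ?_, fun h => by rw [h]⟩
  simp [(potentialEquiv hconn hx₀ v₀ t).2.1, (potentialEquiv hconn hx₀ v₀ s).2.1, hv.symm]

lemma pushStep_eq_onFun (hconn : ArcConnected src tgt) (hx₀ : IsDeltaBond src tgt cl cu Δ x₀)
    (v₀ : V) :
    PushStep src tgt cl cu Δ v₀ = ((UnitStep on Subtype.val) on potentialEquiv hconn hx₀ v₀) := by
  ext s t
  refine ⟨fun ⟨v, hv, h⟩ => ⟨v, (pushSet_eq_iff_potentialEquiv hconn hx₀ hv s t).1 h⟩,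
    fun ⟨v, h⟩ => ?_⟩
  have hv : v ≠ v₀ := by
    rintro rfl
    simpa [(potentialEquiv hconn hx₀ v t).2.1, (potentialEquiv hconn hx₀ v s).2.1] using
      congrFun h v
  exact ⟨v, hv, (pushSet_eq_iff_potentialEquiv hconn hx₀ hv s t).2 h⟩

end Pushes

section Reachability

variable {V A : Type*} {src tgt : A → V} {lo hi : A → ℤ} {v₀ : V}

lemma exists_coboundary_strictlyBetween [Fintype A]
    (hrigid : ∀ a, ∃ π ∈ feasiblePotentials src tgt lo hi v₀,
      ∃ σ ∈ feasiblePotentials src tgt lo hi v₀, coboundary src tgt π a ≠ coboundary src tgt σ a) :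
    ∃ (N : ℤ) (ρ : V → ℤ), ∀ a, N * lo a < coboundary src tgt ρ a ∧
      coboundary src tgt ρ a < N * hi a := by
  choose π hπ σ hσ hne using hrigid
  refine ⟨2 * Fintype.card A, ∑ b, (π b + σ b), fun a => ?_⟩
  have hsum : coboundary src tgt (∑ b, (π b + σ b)) a =
      ∑ b, (coboundary src tgt (π b) a + coboundary src tgt (σ b) a) := by
    simp only [map_sum, map_add, Finset.sum_apply, Pi.add_apply]
  have hconst (c : ℤ) : 2 * Fintype.card A * c = ∑ _b : A, 2 * c := by
    simp only [Finset.sum_const, Finset.card_univ, nsmul_eq_mul]; ring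
  have hb := fun b => And.intro ((hπ b).2 a) ((hσ b).2 a)
  have ha := hne a
  rw [hsum, hconst, hconst]
  constructor <;>
    exact Finset.sum_lt_sum (fun b _ => by have := hb b; omega)
      ⟨a, Finset.mem_univ a, by have := hb a; omega⟩

variable [Fintype V] [DecidableEq V] {N : ℤ} {ρ : V → ℤ}

lemma exists_add_single_mem
    (hρ : ∀ a, N * lo a < coboundary src tgt ρ a ∧ coboundary src tgt ρ a < N * hi a)
    {p q : V → ℤ} (hp : p ∈ feasiblePotentials src tgt lo hi v₀)
    (hq : q ∈ feasiblePotentials src tgt lo hi v₀) (hpq : p < q) :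
    ∃ v, p v < q v ∧ p + Pi.single v 1 ∈ feasiblePotentials src tgt lo hi v₀ := by
  obtain ⟨v, hvM, hmax⟩ := (Finset.univ.filter fun u => p u < q u).exists_max_image
    (fun u => ρ u - N * p u) (by simpa [Finset.filter_nonempty_iff] using (Pi.lt_def.1 hpq).2)
  simp only [Finset.mem_filter, Finset.mem_univ, true_and] at hvM hmax
  have hv₀ : v ≠ v₀ := by rintro rfl; have := hp.1; have := hq.1; omega
  -- An arc blocking the push of `v` alone would lead to a vertex of `{p < q}` with larger
  -- `ρ - N p`.
  have upper : ∀ a, src a = v → tgt a ≠ v → p (src a) - p (tgt a) < hi a := by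
    intro a hs _
    subst hs
    have hpa := hp.2 a; have hqa := hq.2 a; have hρa := (hρ a).2
    simp only [coboundary_apply] at hpa hqa hρa
    by_contra hcon
    have heq : p (src a) - p (tgt a) = hi a := by omega
    have hw := hmax (tgt a) (by omega)
    rw [← heq, mul_sub] at hρa
    linarith
  have lower : ∀ a, tgt a = v → src a ≠ v → lo a < p (src a) - p (tgt a) := by
    intro a ht _
    subst ht
    have hpa := hp.2 a; have hqa := hq.2 a; have hρa := (hρ a).1
    simp only [coboundary_apply] at hpa hqa hρa
    by_contra hcon
    have heq : p (src a) - p (tgt a) = lo a := by omega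
    have hw := hmax (src a) (by omega)
    rw [← heq, mul_sub] at hρa
    linarith
  refine ⟨v, hvM, by simp [hp.1, hv₀.symm], fun a => ?_⟩
  have hpa := hp.2 a
  simp only [coboundary_apply, Pi.add_apply, Pi.single_apply] at hpa ⊢
  by_cases hs : src a = v <;> by_cases ht : tgt a = v
  · simp only [hs, ht, if_true] at hpa ⊢; omega
  · have := upper a hs ht; simp only [hs, ht, if_true, if_false] at hpa this ⊢; omega
  · have := lower a ht hs; simp only [hs, ht, if_true, if_false] at hpa this ⊢; omega
  · simp only [hs, ht, if_false]; omega

lemma reflTransGen_unitStep_of_le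
    (hρ : ∀ a, N * lo a < coboundary src tgt ρ a ∧ coboundary src tgt ρ a < N * hi a)
    {p q : feasiblePotentials src tgt lo hi v₀} (hpq : p ≤ q) :
    ReflTransGen (UnitStep on Subtype.val) p q := by
  obtain ⟨n, hn⟩ : ∃ n : ℕ, ∑ u, ((q : V → ℤ) u - (p : V → ℤ) u) = n :=
    ⟨_, (Int.toNat_of_nonneg (Finset.sum_nonneg fun u _ => sub_nonneg.2 (hpq u))).symm⟩
  induction n generalizing p with
  | zero =>
    have hzero := (Finset.sum_eq_zero_iff_of_nonneg fun u _ => sub_nonneg.2 (hpq u)).1 hn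
    obtain rfl : p = q := le_antisymm hpq fun u => by
      have := hzero u (Finset.mem_univ u)
      show (q : V → ℤ) u ≤ (p : V → ℤ) u
      omega
    rfl
  | succ n ih =>
    have hlt : (p : V → ℤ) < q := lt_of_le_of_ne hpq fun h => by
      simp only [h, sub_self, Finset.sum_const_zero] at hn; omega
    obtain ⟨v, hv, hmem⟩ := exists_add_single_mem hρ p.2 q.2 hlt
    refine ReflTransGen.head ⟨v, rfl⟩ (ih (p := ⟨_, hmem⟩) (fun u => ?_) ?_)
    · have : (p : V → ℤ) u ≤ (q : V → ℤ) u := hpq u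
      rcases eq_or_ne u v with rfl | h
      · simp only [Pi.add_apply, Pi.single_eq_same]; omega
      · simp only [Pi.add_apply, Pi.single_eq_of_ne h]; omega
    · simp only [Pi.add_apply, sub_add_eq_sub_sub, Finset.sum_sub_distrib, Finset.sum_pi_single',
        Finset.mem_univ, if_true] at hn ⊢
      omega

lemma reflTransGen_unitStep_iff_le
    (hρ : ∀ a, N * lo a < coboundary src tgt ρ a ∧ coboundary src tgt ρ a < N * hi a)
    (p q : feasiblePotentials src tgt lo hi v₀) :
    ReflTransGen (UnitStep on Subtype.val) p q ↔ p ≤ q := by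
  refine ⟨fun h => ?_, reflTransGen_unitStep_of_le hρ⟩
  induction h with
  | refl => exact le_rfl
  | tail _ hstep ih => exact ih.trans (UnitStep.le hstep)

lemma reflTransGen_symmGen_unitStep
    (hρ : ∀ a, N * lo a < coboundary src tgt ρ a ∧ coboundary src tgt ρ a < N * hi a)
    (p q : feasiblePotentials src tgt lo hi v₀) :
    ReflTransGen (SymmGen (UnitStep on Subtype.val)) p q :=
  have toSymm := ReflTransGen.mono (r := UnitStep on Subtype.val) fun _ _ => SymmGen.of_rel
  (toSymm _ _ (reflTransGen_unitStep_of_le hρ le_sup_left)).trans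
    (symm (toSymm _ _ (reflTransGen_unitStep_of_le hρ le_sup_right)))

end Reachability

/-- With reduced data and forbidden vertex `v₀`, coloring each legal
single-vertex push between Δ-bonds by the pushed vertex is simultaneously a
U-coloring and an L-coloring, the push digraph is connected, and consequently
the Δ-bonds ordered by push-reachability form a distributive lattice. -/
theorem stmt_15 {V A : Type} [Fintype V] [Fintype A] [DecidableEq V]
    (src tgt : A → V) (cl cu : A → ℤ) (Δ : ClosedWalk V A src tgt → ℤ)
    (hconn : ∀ u w : V, Relation.ReflTransGen
      (fun p q => ∃ a : A, (src a = p ∧ tgt a = q) ∨ (src a = q ∧ tgt a = p)) u w)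
    (hnorigid : ∀ a : A, ∃ y z : A → ℤ, IsDeltaBond src tgt cl cu Δ y ∧
      IsDeltaBond src tgt cl cu Δ z ∧ y a ≠ z a)
    (hnonempty : ∃ x : A → ℤ, IsDeltaBond src tgt cl cu Δ x)
    (v₀ : V) :
    ∃ col : Bond src tgt cl cu Δ → Bond src tgt cl cu Δ → V,
      (∀ s t : Bond src tgt cl cu Δ, PushStep src tgt cl cu Δ v₀ s t →
        col s t ≠ v₀ ∧ t.1 = pushSet src tgt (· = col s t) s.1) ∧
      UColoring (PushStep src tgt cl cu Δ v₀) col ∧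
      UColoring (fun s t => PushStep src tgt cl cu Δ v₀ t s) col ∧
      (∀ s t : Bond src tgt cl cu Δ, Relation.ReflTransGen
        (fun a b => PushStep src tgt cl cu Δ v₀ a b ∨ PushStep src tgt cl cu Δ v₀ b a) s t) ∧
      ∃ (L : Type) (_ : DistribLattice L) (f : Bond src tgt cl cu Δ → L),
        Function.Bijective f ∧
        (∀ s t : Bond src tgt cl cu Δ,
          Relation.ReflTransGen (PushStep src tgt cl cu Δ v₀) s t ↔ f s ≤ f t) := by
  obtain ⟨x₀, hx₀⟩ := hnonempty
  obtain ⟨N, ρ, hρ⟩ := exists_coboundary_strictlyBetween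
    (exists_mem_feasiblePotentials_coboundary_ne hconn hx₀ v₀ hnorigid)
  have hpush := pushStep_eq_onFun hconn hx₀ v₀
  refine ⟨(diffVertex v₀ on Subtype.val) on potentialEquiv hconn hx₀ v₀,
    fun s t ⟨v, hv, h⟩ => ?_, ?_, ?_, fun s t => ?_,
    _, inferInstance, potentialEquiv hconn hx₀ v₀, Equiv.bijective _, fun s t => ?_⟩
  · have hcol : ((diffVertex v₀ on Subtype.val) on potentialEquiv hconn hx₀ v₀) s t = v := by
      simp only [onFun, (pushSet_eq_iff_potentialEquiv hconn hx₀ hv s t).1 h,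
        diffVertex_add_single_right]
    exact hcol ▸ ⟨hv, h⟩
  · rw [hpush]
    exact (uColoring_unitStep _ v₀).onFun (Equiv.bijective _)
  · rw [hpush]
    exact (uColoring_flip_unitStep _ v₀).onFun (Equiv.bijective _)
  · rw [hpush]
    exact (Equiv.reflTransGen_onFun_iff _).2 (reflTransGen_symmGen_unitStep hρ _ _)
  · rw [hpush, Equiv.reflTransGen_onFun_iff]
    exact reflTransGen_unitStep_iff_le hρ _ _
end

section
/- In a finite chip-firing game on a digraph D starting from σ_0, the game has a unique final chip-arrangement σ*, and every maximal firing sequence from any reachable arrangement σ fires the same multiset of vertices. -/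
section ChipFiring

variable {V A : Type} [Fintype V] [Fintype A] [DecidableEq V] (src tgt : A → V)

def outdeg (v : V) : ℕ := (Finset.univ.filter (fun a : A => src a = v)).card

def fire (v : V) (σ : V → ℕ) : V → ℕ :=
  fun w => σ w - (if w = v then outdeg src v else 0)
    + (Finset.univ.filter (fun a : A => src a = v ∧ tgt a = w)).card

def FireStep (σ τ : V → ℕ) : Prop :=
  ∃ v : V, outdeg src v ≤ σ v ∧ τ = fire src tgt v σ

/-- The state obtained from `σ` by firing the vertices of the list `l` in order. -/
def runSeq (σ : V → ℕ) (l : List V) : V → ℕ :=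
  List.foldl (fun s v => fire src tgt v s) σ l

/-- `l` is a valid firing sequence from `σ`: each vertex has enough chips
when it is fired. -/
def ValidSeq (σ : V → ℕ) (l : List V) : Prop :=
  ∀ i : ℕ, ∀ h : i < l.length,
    outdeg src (l.get ⟨i, h⟩) ≤ runSeq src tgt σ (l.take i) (l.get ⟨i, h⟩)

end ChipFiring

/-!
Firings of distinct vertices commute, and firing one vertex never disables another. Hence a
vertex that can fire at `σ` is fired by every maximal valid sequence from `σ` and can be moved
to its front; by induction, any two maximal valid sequences are permutations of each other and
end in the same stable state. A stable reachable state exists because chips are conserved, so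
only finitely many states are reachable, and without cycles among them firing must stop.
-/

theorem Relation.exists_reflTransGen_forall_not_of_finite {α : Type*} {r : α → α → Prop}
    {a : α} (hfin : {b | Relation.ReflTransGen r a b}.Finite)
    (hacyc : ∀ b, Relation.ReflTransGen r a b → ¬ Relation.TransGen r b b) :
    ∃ b, Relation.ReflTransGen r a b ∧ ∀ c, ¬ r b c := by
  let S := {b // Relation.ReflTransGen r a b}
  have : Finite S := hfin.to_subtype
  let after (x y : S) : Prop := Relation.TransGen r y.1 x.1
  have : IsTrans S after := ⟨fun _ _ _ hxy hyz => hyz.trans hxy⟩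
  have : Std.Irrefl after := ⟨fun x => hacyc x.1 x.2⟩
  suffices ∀ x : S, ∃ b, Relation.ReflTransGen r x.1 b ∧ ∀ c, ¬ r b c from
    this ⟨a, .refl⟩
  intro x
  induction x using (Finite.wellFounded_of_trans_of_irrefl after).induction with
  | _ x ih =>
    by_cases hx : ∃ c, r x.1 c
    · obtain ⟨c, hc⟩ := hx
      obtain ⟨b, hcb, hb⟩ := ih ⟨c, x.2.tail hc⟩ (.single hc)
      exact ⟨b, .head hc hcb, hb⟩
    · exact ⟨x.1, .refl, not_exists.mp hx⟩

section ChipFiring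

variable {V A : Type} [Fintype A] [DecidableEq V] {src tgt : A → V}

def IsStable (src : A → V) (σ : V → ℕ) : Prop := ∀ v, σ v < outdeg src v

theorem fire_apply (v : V) (σ : V → ℕ) (w : V) :
    fire src tgt v σ w = σ w - (if w = v then outdeg src v else 0)
      + (Finset.univ.filter (fun a : A => src a = v ∧ tgt a = w)).card := rfl

theorem le_fire_of_ne {v w : V} (h : w ≠ v) (σ : V → ℕ) : σ w ≤ fire src tgt v σ w := by
  rw [fire_apply, if_neg h]; omega

theorem fire_comm {v w : V} (hvw : v ≠ w) {σ : V → ℕ}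
    (hv : outdeg src v ≤ σ v) (hw : outdeg src w ≤ σ w) :
    fire src tgt v (fire src tgt w σ) = fire src tgt w (fire src tgt v σ) := by
  funext u
  by_cases hu : u = v
  · subst hu
    simp only [fire_apply, ↓reduceIte, if_neg hvw]
    omega
  · by_cases hu' : u = w
    · subst hu'
      simp only [fire_apply, ↓reduceIte, if_neg hu]
      omega
    · simp only [fire_apply, if_neg hu, if_neg hu']
      omega

theorem forall_not_fireStep_iff {σ : V → ℕ} :
    (∀ τ, ¬ FireStep src tgt σ τ) ↔ IsStable src σ := by
  simp only [FireStep, IsStable, not_exists, not_and]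
  exact ⟨fun h v => not_le.mp fun hv => h _ v hv rfl, fun h τ v hv _ => (h v).not_ge hv⟩

section Conservation

variable [Fintype V]

theorem outdeg_eq_sum_card (v : V) :
    outdeg src v = ∑ w : V, (Finset.univ.filter (fun a : A => src a = v ∧ tgt a = w)).card := by
  rw [outdeg, Finset.card_eq_sum_card_fiberwise (f := tgt) (t := Finset.univ)
    (fun a _ => Finset.mem_univ _)]
  simp only [Finset.filter_filter]

theorem sum_fire {v : V} {σ : V → ℕ} (hv : outdeg src v ≤ σ v) :
    ∑ w, fire src tgt v σ w = ∑ w, σ w := by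
  have key : ∀ w, fire src tgt v σ w + (if w = v then outdeg src v else 0)
      = σ w + (Finset.univ.filter (fun a : A => src a = v ∧ tgt a = w)).card := by
    intro w
    by_cases h : w = v
    · subst h; simp only [fire_apply, ↓reduceIte]; omega
    · simp only [fire_apply, if_neg h]; omega
  have hsum := Finset.sum_congr rfl (fun w (_ : w ∈ Finset.univ) => key w)
  rw [Finset.sum_add_distrib, Finset.sum_add_distrib, Finset.sum_ite_eq' Finset.univ v,
    ← outdeg_eq_sum_card (tgt := tgt), if_pos (Finset.mem_univ v)] at hsum
  omega

theorem sum_eq_of_reflTransGen {σ τ : V → ℕ}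
    (h : Relation.ReflTransGen (FireStep src tgt) σ τ) : ∑ v, τ v = ∑ v, σ v := by
  induction h with
  | refl => rfl
  | tail _ hstep ih =>
    obtain ⟨v, hv, rfl⟩ := hstep
    rw [sum_fire hv, ih]

theorem finite_setOf_reflTransGen (σ : V → ℕ) :
    {τ | Relation.ReflTransGen (FireStep src tgt) σ τ}.Finite := by
  refine (Set.Finite.pi (t := fun _ : V => Set.Iic (∑ v, σ v))
    fun _ => Set.finite_Iic _).subset fun τ hτ v _ => ?_
  rw [Set.mem_Iic, ← sum_eq_of_reflTransGen hτ]
  exact Finset.single_le_sum (fun _ _ => Nat.zero_le _) (Finset.mem_univ v)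

end Conservation

theorem runSeq_cons (σ : V → ℕ) (v : V) (l : List V) :
    runSeq src tgt σ (v :: l) = runSeq src tgt (fire src tgt v σ) l := rfl

theorem le_runSeq_of_not_mem {v : V} {l : List V} (hv : v ∉ l) (σ : V → ℕ) :
    σ v ≤ runSeq src tgt σ l v := by
  induction l generalizing σ with
  | nil => exact le_rfl
  | cons w l ih =>
    rw [List.mem_cons, not_or] at hv
    exact (le_fire_of_ne hv.1 σ).trans (ih hv.2 _)

theorem validSeq_nil (σ : V → ℕ) : ValidSeq src tgt σ [] := by
  intro i h; simp at h

theorem validSeq_cons {σ : V → ℕ} {v : V} {l : List V} :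
    ValidSeq src tgt σ (v :: l) ↔
      outdeg src v ≤ σ v ∧ ValidSeq src tgt (fire src tgt v σ) l := by
  constructor
  · intro h
    refine ⟨by simpa [runSeq] using h 0 (by simp), fun i hi => ?_⟩
    simpa [runSeq, List.take_succ_cons] using h (i + 1) (by simpa using hi)
  · rintro ⟨h0, h⟩ (_ | i) hi
    · simpa [runSeq] using h0
    · simpa [runSeq, List.take_succ_cons] using h i (by simpa using hi)

theorem exists_validSeq_of_reflTransGen {σ τ : V → ℕ}
    (h : Relation.ReflTransGen (FireStep src tgt) σ τ) :
    ∃ l, ValidSeq src tgt σ l ∧ runSeq src tgt σ l = τ := by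
  induction h using Relation.ReflTransGen.head_induction_on with
  | refl => exact ⟨[], validSeq_nil τ, rfl⟩
  | head hstep _ ih =>
    obtain ⟨v, hv, rfl⟩ := hstep
    obtain ⟨l, hl, hrun⟩ := ih
    exact ⟨v :: l, validSeq_cons.mpr ⟨hv, hl⟩, hrun⟩

theorem IsStable.eq_nil_of_validSeq {σ : V → ℕ} (hσ : IsStable src σ) {l : List V}
    (hl : ValidSeq src tgt σ l) : l = [] := by
  cases l with
  | nil => rfl
  | cons v l => exact absurd (validSeq_cons.mp hl).1 (hσ v).not_ge

theorem mem_of_isStable_runSeq {σ : V → ℕ} {v : V} (hv : outdeg src v ≤ σ v)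
    {l : List V} (hl : IsStable src (runSeq src tgt σ l)) : v ∈ l := by
  by_contra hvl
  exact (hl v).not_ge (hv.trans (le_runSeq_of_not_mem hvl σ))

theorem ValidSeq.exists_perm_cons {σ : V → ℕ} {l : List V} (hl : ValidSeq src tgt σ l)
    {v : V} (hvl : v ∈ l) (hv : outdeg src v ≤ σ v) :
    ∃ l', l.Perm (v :: l') ∧ ValidSeq src tgt (fire src tgt v σ) l' ∧
      runSeq src tgt (fire src tgt v σ) l' = runSeq src tgt σ l := by
  induction l generalizing σ with
  | nil => simp at hvl
  | cons w t ih =>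
    obtain ⟨hw, ht⟩ := validSeq_cons.mp hl
    by_cases hwv : w = v
    · subst hwv
      exact ⟨t, .refl _, ht, rfl⟩
    have hvt : v ∈ t := (List.mem_cons.mp hvl).resolve_left (Ne.symm hwv)
    obtain ⟨t', hperm, hvalid, hrun⟩ :=
      ih ht hvt (hv.trans (le_fire_of_ne (Ne.symm hwv) σ))
    have hcomm := fire_comm (tgt := tgt) (Ne.symm hwv) hv hw
    refine ⟨w :: t', (hperm.cons w).trans (.swap v w t'), ?_, ?_⟩
    · exact validSeq_cons.mpr ⟨hw.trans (le_fire_of_ne hwv σ), hcomm ▸ hvalid⟩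
    · rw [runSeq_cons, ← hcomm, hrun, runSeq_cons]

theorem ValidSeq.perm_of_isStable {σ : V → ℕ} {l₁ l₂ : List V}
    (h₁ : ValidSeq src tgt σ l₁) (h₂ : ValidSeq src tgt σ l₂)
    (hs₁ : IsStable src (runSeq src tgt σ l₁)) (hs₂ : IsStable src (runSeq src tgt σ l₂)) :
    l₁.Perm l₂ ∧ runSeq src tgt σ l₁ = runSeq src tgt σ l₂ := by
  induction l₁ generalizing σ l₂ with
  | nil =>
    obtain rfl := IsStable.eq_nil_of_validSeq hs₁ h₂
    exact ⟨.refl _, rfl⟩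
  | cons v t ih =>
    obtain ⟨hv, ht⟩ := validSeq_cons.mp h₁
    obtain ⟨l', hperm, hvalid, hrun⟩ :=
      h₂.exists_perm_cons (mem_of_isStable_runSeq hv hs₂) hv
    obtain ⟨htl', hrun'⟩ := ih ht hvalid hs₁ (hrun ▸ hs₂)
    exact ⟨(htl'.cons v).trans hperm.symm, hrun'.trans hrun⟩

end ChipFiring

/-- In a finite chip-firing game there is a unique reachable arrangement in
which no vertex can fire, and any two maximal firing sequences from a common
reachable arrangement fire the same multiset of vertices. -/
theorem stmt_18 {V A : Type} [Fintype V] [Fintype A] [DecidableEq V]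
    (src tgt : A → V) (σ₀ : V → ℕ)
    (hfin : ∀ σ : V → ℕ, Relation.ReflTransGen (FireStep src tgt) σ₀ σ →
      ¬ Relation.TransGen (FireStep src tgt) σ σ) :
    (∃! σf : V → ℕ, Relation.ReflTransGen (FireStep src tgt) σ₀ σf ∧
      ∀ v : V, σf v < outdeg src v) ∧
    (∀ σ : V → ℕ, Relation.ReflTransGen (FireStep src tgt) σ₀ σ →
      ∀ l₁ l₂ : List V, ValidSeq src tgt σ l₁ → ValidSeq src tgt σ l₂ →
        (∀ v : V, runSeq src tgt σ l₁ v < outdeg src v) →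
        (∀ v : V, runSeq src tgt σ l₂ v < outdeg src v) →
        (↑l₁ : Multiset V) = (↑l₂ : Multiset V)) := by
  refine ⟨?_, fun σ _ l₁ l₂ h₁ h₂ hs₁ hs₂ =>
    Multiset.coe_eq_coe.mpr (h₁.perm_of_isStable h₂ hs₁ hs₂).1⟩
  obtain ⟨σf, hreach, hstable⟩ :=
    Relation.exists_reflTransGen_forall_not_of_finite (finite_setOf_reflTransGen σ₀) hfin
  refine ⟨σf, ⟨hreach, forall_not_fireStep_iff.mp hstable⟩, fun σg ⟨hreach', hstable'⟩ => ?_⟩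
  obtain ⟨l₁, hl₁, rfl⟩ := exists_validSeq_of_reflTransGen hreach'
  obtain ⟨l₂, hl₂, rfl⟩ := exists_validSeq_of_reflTransGen hreach
  exact (hl₁.perm_of_isStable hl₂ hstable' (forall_not_fireStep_iff.mp hstable)).2
end

section
/- Fix v_0 ∈ V in a connected digraph D with capacities c_l ≤ c_u. The set Π_{v_0}(D,c_l,c_u) of feasible vertex potentials π : V → ℤ with π(v_0)=0 and c_l(a) ≤ π(w) − π(v) ≤ c_u(a) for every arc a=(v,w) is closed under componentwise maximum and componentwise minimum; hence, if nonempty and finite, it is a distributive lattice under the componentwise order. -/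
/-!
The bounds `l ≤ x - y ≤ u` on one arc are preserved by taking maxima (or minima) of both
endpoints: e.g. `max a b ≤ max c d + u` because `a ≤ c + u` and `b ≤ d + u`. Hence the
feasible potentials form a sublattice of `V → ℤ`, which is distributive.
-/

/-- A feasible vertex potential: value `0` at the forbidden vertex `v₀` and
the difference along every arc bounded by the capacities. -/
def FeasiblePotential {V A : Type*} (src tgt : A → V) (v₀ : V) (cl cu : A → ℤ)
    (π : V → ℤ) : Prop :=
  π v₀ = 0 ∧ ∀ a : A, cl a ≤ π (tgt a) - π (src a) ∧ π (tgt a) - π (src a) ≤ cu a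

section MaxMin

variable {α : Type*} [AddCommGroup α] [LinearOrder α] [IsOrderedAddMonoid α] {a b c d l u : α}

theorem max_sub_max_mem_Icc (h₁ : a - c ∈ Set.Icc l u) (h₂ : b - d ∈ Set.Icc l u) :
    max a b - max c d ∈ Set.Icc l u := by
  simp only [Set.mem_Icc, le_sub_iff_add_le, sub_le_iff_le_add] at *
  constructor
  · rw [add_max]
    exact max_le_max h₁.1 h₂.1
  · rw [add_max]
    exact max_le_max h₁.2 h₂.2

theorem min_sub_min_mem_Icc (h₁ : a - c ∈ Set.Icc l u) (h₂ : b - d ∈ Set.Icc l u) :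
    min a b - min c d ∈ Set.Icc l u := by
  simp only [Set.mem_Icc, le_sub_iff_add_le, sub_le_iff_le_add] at *
  constructor
  · rw [add_min]
    exact min_le_min h₁.1 h₂.1
  · rw [add_min]
    exact min_le_min h₁.2 h₂.2

end MaxMin

namespace FeasiblePotential

variable {V A : Type*} {src tgt : A → V} {v₀ : V} {cl cu : A → ℤ} {π π' : V → ℤ}

theorem sup (h : FeasiblePotential src tgt v₀ cl cu π)
    (h' : FeasiblePotential src tgt v₀ cl cu π') :
    FeasiblePotential src tgt v₀ cl cu (π ⊔ π') :=
  ⟨by simp [h.1, h'.1], fun a => max_sub_max_mem_Icc (h.2 a) (h'.2 a)⟩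

theorem inf (h : FeasiblePotential src tgt v₀ cl cu π)
    (h' : FeasiblePotential src tgt v₀ cl cu π') :
    FeasiblePotential src tgt v₀ cl cu (π ⊓ π') :=
  ⟨by simp [h.1, h'.1], fun a => min_sub_min_mem_Icc (h.2 a) (h'.2 a)⟩

instance : DistribLattice {π : V → ℤ // FeasiblePotential src tgt v₀ cl cu π} :=
  Subtype.distribLattice (fun _ _ => sup) (fun _ _ => inf)

end FeasiblePotential

/-- The set of feasible vertex potentials is closed under componentwise max
and min; hence, under the componentwise order, pairwise suprema and infima
exist in the set of feasible potentials and are given componentwise — a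
distributive lattice structure. -/
theorem stmt_19 {V A : Type} (src tgt : A → V) (v₀ : V) (cl cu : A → ℤ) :
    (∀ π π' : V → ℤ, FeasiblePotential src tgt v₀ cl cu π →
      FeasiblePotential src tgt v₀ cl cu π' →
      FeasiblePotential src tgt v₀ cl cu (π ⊔ π') ∧
      FeasiblePotential src tgt v₀ cl cu (π ⊓ π')) ∧
    (∀ x y : {π : V → ℤ // FeasiblePotential src tgt v₀ cl cu π},
      (∃ s : {π : V → ℤ // FeasiblePotential src tgt v₀ cl cu π},
        IsLUB {x, y} s ∧ s.1 = x.1 ⊔ y.1) ∧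
      (∃ m : {π : V → ℤ // FeasiblePotential src tgt v₀ cl cu π},
        IsGLB {x, y} m ∧ m.1 = x.1 ⊓ y.1)) :=
  ⟨fun _ _ h h' => ⟨h.sup h', h.inf h'⟩,
    fun x y => ⟨⟨x ⊔ y, isLUB_pair, rfl⟩, ⟨x ⊓ y, isGLB_pair, rfl⟩⟩⟩
end
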